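/- arXiv:2504.01878 — 10 statements merged into one kernel-verified Lean document; each statement's English description precedes it below -/
import Mathlib

section
/- If ẑ is a real root of h, then the trace of the Jacobian matrix J(ẑ, kₛ·ẑ⁴) equals T(ẑ) = c₃·ẑ⁶ − c₂·ẑ⁴ + c₁·ẑ² + c₀ − ε. -/
/-!
The trace of `J(ẑ, kₛẑ⁴)` is
`∂f₁/∂z + ∂f₂/∂s = -d + (1 - tanh² ψ) · a(3kẑ² + μ₀ - kₛẑ⁴) - ε`.
At an equilibrium `tanh ψ = dẑ`, so the factor `1 - tanh² ψ` becomes the polynomial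
`1 - d²ẑ²`, and expanding the product gives `T(ẑ)`.
-/

/-- The Jacobian matrix of a planar vector field `F : ℝ² → ℝ²` at the point `p`:
the 2×2 real matrix of partial derivatives of the two components of `F`
with respect to the two coordinates. -/
noncomputable def jacobian (F : ℝ × ℝ → ℝ × ℝ) (p : ℝ × ℝ) : Matrix (Fin 2) (Fin 2) ℝ :=
  !![fderiv ℝ (fun q => (F q).1) p (1, 0), fderiv ℝ (fun q => (F q).1) p (0, 1);
     fderiv ℝ (fun q => (F q).2) p (1, 0), fderiv ℝ (fun q => (F q).2) p (0, 1)]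

theorem Real.hasDerivAt_tanh (x : ℝ) : HasDerivAt Real.tanh (1 - Real.tanh x ^ 2) x := by
  have h := (Real.hasDerivAt_sinh x).div (Real.hasDerivAt_cosh x) (Real.cosh_pos x).ne'
  rw [show Real.sinh / Real.cosh = Real.tanh by ext; simp [Real.tanh_eq_sinh_div_cosh]] at h
  refine h.congr_deriv ?_
  have hcosh := (Real.cosh_pos x).ne'
  rw [Real.tanh_eq_sinh_div_cosh]
  field_simp

@[fun_prop]
theorem Real.differentiable_tanh : Differentiable ℝ Real.tanh :=
  fun x => (Real.hasDerivAt_tanh x).differentiableAt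

section PartialDerivatives

variable {𝕜 E : Type*} [NontriviallyNormedField 𝕜] [NormedAddCommGroup E] [NormedSpace 𝕜 E]
  {G : 𝕜 × 𝕜 → E} {p : 𝕜 × 𝕜}

theorem fderiv_apply_one_zero (hG : DifferentiableAt 𝕜 G p) :
    fderiv 𝕜 G p (1, 0) = deriv (fun x => G (x, p.2)) p.1 := by
  have hline : HasDerivAt (fun x : 𝕜 => (x, p.2)) (1, 0) p.1 :=
    (hasDerivAt_id _).prodMk (hasDerivAt_const _ _)
  exact (hG.hasFDerivAt.comp_hasDerivAt p.1 hline).deriv.symm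

theorem fderiv_apply_zero_one (hG : DifferentiableAt 𝕜 G p) :
    fderiv 𝕜 G p (0, 1) = deriv (fun y => G (p.1, y)) p.2 := by
  have hline : HasDerivAt (fun y : 𝕜 => (p.1, y)) (0, 1) p.2 :=
    (hasDerivAt_const _ _).prodMk (hasDerivAt_id _)
  exact (hG.hasFDerivAt.comp_hasDerivAt p.2 hline).deriv.symm

end PartialDerivatives

theorem trace_jacobian {F : ℝ × ℝ → ℝ × ℝ} {p : ℝ × ℝ}
    (h₁ : DifferentiableAt ℝ (fun q => (F q).1) p)
    (h₂ : DifferentiableAt ℝ (fun q => (F q).2) p) :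
    (jacobian F p).trace =
      deriv (fun x => (F (x, p.2)).1) p.1 + deriv (fun y => (F (p.1, y)).2) p.2 := by
  rw [Matrix.trace_fin_two, jacobian, Matrix.of_apply, Matrix.of_apply]
  simp only [Matrix.cons_val_zero, Matrix.cons_val_one]
  rw [fderiv_apply_one_zero h₁, fderiv_apply_zero_one h₂]

theorem hasDerivAt_snod_fst (a d k μ0 b s z : ℝ) :
    HasDerivAt (fun z => -d * z + Real.tanh (a * z * (k * z ^ 2 + μ0 - s) + b))
      (-d + (1 - Real.tanh (a * z * (k * z ^ 2 + μ0 - s) + b) ^ 2) *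
        (a * (3 * k * z ^ 2 + μ0 - s))) z := by
  have hψ : HasDerivAt (fun z => a * z * (k * z ^ 2 + μ0 - s) + b)
      (a * (3 * k * z ^ 2 + μ0 - s)) z := by
    have := (((hasDerivAt_id z).const_mul a).mul
      ((((hasDerivAt_pow 2 z).const_mul k).add_const μ0).sub_const s)).add_const b
    refine this.congr_deriv ?_
    simp only [id]
    ring
  refine (((hasDerivAt_id z).const_mul (-d)).add
    ((Real.hasDerivAt_tanh _).comp z hψ)).congr_deriv ?_
  simp

theorem snod_trace_jacobian_general
    (a d k ks ε μ0 b : ℝ)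
    (c3 c2 c1 c0 : ℝ)
    (hc3 : c3 = a * d ^ 2 * ks) (hc2 : c2 = 3 * a * d ^ 2 * k + a * ks)
    (hc1 : c1 = 3 * a * k - a * d ^ 2 * μ0) (hc0 : c0 = a * μ0 - d)
    (zhat : ℝ)
    (hroot : -d * zhat + Real.tanh (a * zhat * (-ks * zhat ^ 4 + k * zhat ^ 2 + μ0) + b) = 0) :
    Matrix.trace
      (jacobian
        (fun p : ℝ × ℝ =>
          (-d * p.1 + Real.tanh (a * p.1 * (k * p.1 ^ 2 + μ0 - p.2) + b),
            ε * (-p.2 + ks * p.1 ^ 4)))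
        (zhat, ks * zhat ^ 4)) =
      c3 * zhat ^ 6 - c2 * zhat ^ 4 + c1 * zhat ^ 2 + c0 - ε := by
  have htanh : Real.tanh (a * zhat * (k * zhat ^ 2 + μ0 - ks * zhat ^ 4) + b) = d * zhat := by
    rw [show k * zhat ^ 2 + μ0 - ks * zhat ^ 4 = -ks * zhat ^ 4 + k * zhat ^ 2 + μ0 by ring]
    linarith
  have hslow : HasDerivAt (fun s => ε * (-s + ks * zhat ^ 4)) (-ε) (ks * zhat ^ 4) := by
    simpa using ((hasDerivAt_id _).neg.add_const (ks * zhat ^ 4)).const_mul ε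
  rw [trace_jacobian (by fun_prop) (by fun_prop), (hasDerivAt_snod_fst ..).deriv, hslow.deriv,
    htanh, hc3, hc2, hc1, hc0]
  ring

/-- If `ẑ` is a real root of `h`, then the trace of the Jacobian
matrix `J(ẑ, kₛ·ẑ⁴)` of the S-NOD vector field equals
`T(ẑ) = c₃·ẑ⁶ − c₂·ẑ⁴ + c₁·ẑ² + c₀ − ε`. -/
theorem snod_trace_jacobian
    (a d k ks ε μ0 b : ℝ)
    (ha : 0 < a) (hd : 0 < d) (hk : 0 < k) (hks : 0 < ks) (hε : 0 < ε) (hμ0 : 0 < μ0)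
    (c3 c2 c1 c0 : ℝ)
    (hc3 : c3 = a * d ^ 2 * ks) (hc2 : c2 = 3 * a * d ^ 2 * k + a * ks)
    (hc1 : c1 = 3 * a * k - a * d ^ 2 * μ0) (hc0 : c0 = a * μ0 - d)
    (zhat : ℝ)
    (hroot : -d * zhat + Real.tanh (a * zhat * (-ks * zhat ^ 4 + k * zhat ^ 2 + μ0) + b) = 0) :
    Matrix.trace
      (jacobian
        (fun p : ℝ × ℝ =>
          (-d * p.1 + Real.tanh (a * p.1 * (k * p.1 ^ 2 + μ0 - p.2) + b),
            ε * (-p.2 + ks * p.1 ^ 4)))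
        (zhat, ks * zhat ^ 4)) =
      c3 * zhat ^ 6 - c2 * zhat ^ 4 + c1 * zhat ^ 2 + c0 - ε :=
  snod_trace_jacobian_general a d k ks ε μ0 b c3 c2 c1 c0 hc3 hc2 hc1 hc0 zhat hroot
end

section
/- Assume ζ₀ ∈ ℝ₊ and D(√ζ₀) > 0. Then for every input b ∈ ℝ, the function h has exactly one real root; equivalently, the S-NOD system has a unique fixed point. -/
/-!
A root of `h` satisfies `tanh (ψ z) = d z`, so `|d z| < 1` and the roots of `h` are exactly the
zeros of `artanh (d z) - ψ z` on that interval. Its derivative has the sign of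
`d - (1 - d² z²) ψ'(z) = D z`, a cubic in `t = z²` with negative leading coefficient. On
`t ≤ 1/d²` such a cubic is bounded below by its values at its local minimum `ζ₀` and at `1/d²`,
where it equals `d`. Hence `artanh (d z) - ψ z` is strictly increasing, and the intermediate value
theorem supplies the root.
-/

open Real Set Filter Topology

theorem Real.continuous_tanh : Continuous tanh := by
  rw [show tanh = fun x => sinh x / cosh x from funext tanh_eq_sinh_div_cosh]
  exact continuous_sinh.div continuous_cosh fun x => (cosh_pos x).ne'

theorem Real.hasDerivAt_artanh {x : ℝ} (hx : x ∈ Ioo (-1) 1) :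
    HasDerivAt artanh (1 - x ^ 2)⁻¹ x := by
  have hp : 0 < 1 + x := by linarith [hx.1]
  have hm : 0 < 1 - x := by linarith [hx.2]
  have hlog : HasDerivAt (fun y => 1 / 2 * (log (1 + y) - log (1 - y)))
      (1 / 2 * (1 / (1 + x) - -1 / (1 - x))) x :=
    ((((hasDerivAt_id x).const_add 1).log hp.ne').sub
      (((hasDerivAt_id x).const_sub 1).log hm.ne')).const_mul _
  have heq : (fun y => 1 / 2 * (log (1 + y) - log (1 - y))) =ᶠ[𝓝 x] artanh := by
    filter_upwards [isOpen_Ioo.mem_nhds hx] with y hy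
    rw [artanh_eq_half_log (Ioo_subset_Icc_self hy),
      log_div (by linarith [hy.1]) (by linarith [hy.2])]
  refine (hlog.congr_of_eventuallyEq heq.symm).congr_deriv ?_
  have : 1 - x ^ 2 ≠ 0 := by nlinarith
  field_simp
  ring

theorem quadratic_smaller_root_spec {α B C ζ : ℝ} (hα : 0 < α) (hdisc : 0 ≤ B ^ 2 - α * C)
    (hζ : ζ = (B - √(B ^ 2 - α * C)) / α) : C = 2 * B * ζ - α * ζ ^ 2 ∧ α * ζ ≤ B := by
  have hαζ : α * ζ = B - √(B ^ 2 - α * C) := by rw [hζ]; field_simp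
  have hsq := sq_sqrt hdisc
  refine ⟨mul_left_cancel₀ hα.ne' ?_, by linarith [sqrt_nonneg (B ^ 2 - α * C)]⟩
  linear_combination (α * ζ - B - √(B ^ 2 - α * C)) * hαζ + hsq

theorem neg_cubic_pos_of_le {A B C E ζ T t : ℝ} (hA : 0 < A)
    (hcrit : C = 2 * B * ζ - 3 * A * ζ ^ 2) (hmin : 3 * A * ζ ≤ B)
    (hζ : 0 < -A * ζ ^ 3 + B * ζ ^ 2 - C * ζ - E) (hT : 0 < -A * T ^ 3 + B * T ^ 2 - C * T - E)
    (ht : t ≤ T) : 0 < -A * t ^ 3 + B * t ^ 2 - C * t - E := by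
  -- With `p` the cubic: `p t - p ζ = (t - ζ)² (B - A (t + 2ζ))` and
  -- `p t - p T = (T - t) (A (T - ζ)² + (A (t + 2ζ) - B) (t + T - 2ζ))`.
  rcases le_or_gt (A * (t + 2 * ζ)) B with hleft | hright
  · have hgap : 0 ≤ (t - ζ) ^ 2 * (B - A * (t + 2 * ζ)) :=
      mul_nonneg (sq_nonneg _) (by linarith)
    linear_combination hζ + hgap + (t - ζ) * hcrit
  · have htζ : ζ < t := by nlinarith
    have hgap : 0 ≤ (T - t) * (A * (T - ζ) ^ 2 + (A * (t + 2 * ζ) - B) * (t + T - 2 * ζ)) :=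
      mul_nonneg (by linarith) (add_nonneg (by positivity)
        (mul_nonneg (by linarith) (by linarith)))
    linear_combination hT + hgap + (t - T) * hcrit

section TanhFixedPoint

variable {d : ℝ} {ψ ψ' : ℝ → ℝ}

theorem strictMonoOn_artanh_mul_sub (hψ : ∀ z, HasDerivAt ψ (ψ' z) z)
    (hslope : ∀ z, d * z ∈ Ioo (-1) 1 → (1 - (d * z) ^ 2) * ψ' z < d) :
    StrictMonoOn (fun z => artanh (d * z) - ψ z) ((d * ·) ⁻¹' Ioo (-1) 1) := by
  set S := (d * ·) ⁻¹' Ioo (-1 : ℝ) 1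
  have hconv : Convex ℝ S := (convex_Ioo _ _).is_linear_preimage (IsLinearMap.isLinearMap_smul d)
  have hint : interior S = S := (isOpen_Ioo.preimage (continuous_const_mul d)).interior_eq
  have hderiv : ∀ z ∈ S,
      HasDerivAt (fun z => artanh (d * z) - ψ z) ((1 - (d * z) ^ 2)⁻¹ * d - ψ' z) z := by
    intro z hz
    have hlin : HasDerivAt (d * ·) d z := by simpa using (hasDerivAt_id z).const_mul d
    exact ((hasDerivAt_artanh hz).comp z hlin).sub (hψ z)
  refine strictMonoOn_of_hasDerivWithinAt_pos hconv
    (fun z hz => (hderiv z hz).continuousAt.continuousWithinAt)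
    (fun z hz => (hderiv z (hint ▸ hz)).hasDerivWithinAt) fun z hz => ?_
  rw [hint] at hz
  have hpos : 0 < 1 - (d * z) ^ 2 := by nlinarith [hz.1, hz.2]
  exact sub_pos.2 ((lt_inv_mul_iff₀ hpos).2 (hslope z hz))

theorem existsUnique_neg_mul_add_tanh_eq_zero (hd : 0 < d) (hψ : ∀ z, HasDerivAt ψ (ψ' z) z)
    (hslope : ∀ z, d * z ∈ Ioo (-1) 1 → (1 - (d * z) ^ 2) * ψ' z < d) :
    ∃! z, -d * z + tanh (ψ z) = 0 := by
  have hcont : Continuous fun z => -d * z + tanh (ψ z) :=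
    (continuous_const_mul (-d)).add
      (continuous_tanh.comp (continuous_iff_continuousAt.2 fun z => (hψ z).continuousAt))
  obtain ⟨z, hz⟩ : (0 : ℝ) ∈ range fun z => -d * z + tanh (ψ z) := by
    refine intermediate_value_univ d⁻¹ (-d⁻¹) hcont ⟨?_, ?_⟩ <;>
      simp only [neg_mul, mul_neg, neg_neg, mul_inv_cancel₀ hd.ne']
    · linarith [tanh_lt_one (ψ d⁻¹)]
    · linarith [neg_one_lt_tanh (ψ (-d⁻¹))]
  have hroot : ∀ z, -d * z + tanh (ψ z) = 0 → d * z ∈ Ioo (-1) 1 ∧ artanh (d * z) - ψ z = 0 := by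
    intro z hz
    have htanh : tanh (ψ z) = d * z := by linarith
    refine ⟨htanh ▸ ⟨neg_one_lt_tanh _, tanh_lt_one _⟩, ?_⟩
    rw [← htanh, artanh_tanh, sub_self]
  refine ⟨z, hz, fun y hy => ?_⟩
  obtain ⟨hyI, hyG⟩ := hroot y hy
  obtain ⟨hzI, hzG⟩ := hroot z hz
  exact (strictMonoOn_artanh_mul_sub hψ hslope).injOn hyI hzI (hyG.trans hzG.symm)

end TanhFixedPoint

theorem snod_unique_fixed_point_general
    (a d k ks μ0 : ℝ)
    (ha : 0 < a) (hd : 0 < d) (hks : 0 < ks)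
    (c3 c2 c1 c0 : ℝ)
    (hc3 : c3 = a * d ^ 2 * ks) (hc2 : c2 = 3 * a * d ^ 2 * k + a * ks)
    (hc1 : c1 = 3 * a * k - a * d ^ 2 * μ0) (hc0 : c0 = a * μ0 - d)
    (D : ℝ → ℝ)
    (hD : D = fun z => -5 * c3 * z ^ 6 + (c2 + 4 * a * ks) * z ^ 4 - c1 * z ^ 2 - c0)
    (ζ0 : ℝ)
    (hζ0 : ζ0 = ((c2 + 4 * a * ks) -
      Real.sqrt ((c2 + 4 * a * ks) ^ 2 - 15 * c1 * c3)) / (15 * c3))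
    (hdisc : (c2 + 4 * a * ks) ^ 2 - 15 * c1 * c3 ≥ 0)
    (hζ0pos : 0 < ζ0)
    (hDζ0 : 0 < D (Real.sqrt ζ0)) :
    ∀ b : ℝ, ∃! z : ℝ,
      -d * z + Real.tanh (a * z * (-ks * z ^ 4 + k * z ^ 2 + μ0) + b) = 0 := by
  intro b
  set B := c2 + 4 * a * ks with hB
  have hc3pos : 0 < c3 := by rw [hc3]; positivity
  rw [mul_right_comm 15 c1 c3] at hdisc hζ0
  obtain ⟨hcrit, hmin⟩ := quadratic_smaller_root_spec (by positivity) hdisc hζ0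
  have hsq : √ζ0 ^ 2 = ζ0 := sq_sqrt hζ0pos.le
  have hpζ0 : 0 < -(5 * c3) * ζ0 ^ 3 + B * ζ0 ^ 2 - c1 * ζ0 - c0 := by
    simp only [hD, show √ζ0 ^ 6 = ζ0 ^ 3 by rw [show 6 = 2 * 3 by rfl, pow_mul, hsq],
      show √ζ0 ^ 4 = ζ0 ^ 2 by rw [show 4 = 2 * 2 by rfl, pow_mul, hsq], hsq] at hDζ0
    linarith
  have hpT : -(5 * c3) * (1 / d ^ 2) ^ 3 + B * (1 / d ^ 2) ^ 2 - c1 * (1 / d ^ 2) - c0 = d := by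
    rw [hB, hc3, hc2, hc1, hc0]; field_simp; ring
  have hp : ∀ t ≤ 1 / d ^ 2, 0 < -(5 * c3) * t ^ 3 + B * t ^ 2 - c1 * t - c0 := fun t ht =>
    neg_cubic_pos_of_le (by positivity) (by linarith) (by linarith) hpζ0 (by rw [hpT]; exact hd) ht
  have hψ : ∀ z, HasDerivAt (fun z => a * z * (-ks * z ^ 4 + k * z ^ 2 + μ0) + b)
      (a * μ0 + 3 * a * k * z ^ 2 - 5 * a * ks * z ^ 4) z := fun z => by
    have h := ((((hasDerivAt_id' z).const_mul a).fun_mul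
      ((((hasDerivAt_pow 4 z).const_mul (-ks)).fun_add
        ((hasDerivAt_pow 2 z).const_mul k)).add_const μ0)).add_const b)
    exact h.congr_deriv (by push_cast; ring)
  refine existsUnique_neg_mul_add_tanh_eq_zero hd hψ fun z hz => ?_
  have hz2 : z ^ 2 ≤ 1 / d ^ 2 := by
    rw [le_div_iff₀ (by positivity)]; nlinarith [hz.1, hz.2]
  have hslope : (1 - (d * z) ^ 2) * (a * μ0 + 3 * a * k * z ^ 2 - 5 * a * ks * z ^ 4) =
      d - (-(5 * c3) * (z ^ 2) ^ 3 + B * (z ^ 2) ^ 2 - c1 * z ^ 2 - c0) := by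
    rw [hB, hc3, hc2, hc1, hc0]; ring
  linarith [hp _ hz2]

/-- If `ζ₀ ∈ ℝ₊` (i.e. `(c₂ + 4·a·kₛ)² − 15·c₁·c₃ ≥ 0` and `ζ₀ > 0`)
and `D(√ζ₀) > 0`, then for every input `b ∈ ℝ` the function
`h(z) = −d·z + tanh(a·z·(−kₛ·z⁴ + k·z² + μ₀) + b)` has exactly one real root;
equivalently, the S-NOD system has a unique fixed point. -/
theorem snod_unique_fixed_point
    (a d k ks ε μ0 : ℝ)
    (ha : 0 < a) (hd : 0 < d) (hk : 0 < k) (hks : 0 < ks) (hε : 0 < ε) (hμ0 : 0 < μ0)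
    (c3 c2 c1 c0 : ℝ)
    (hc3 : c3 = a * d ^ 2 * ks) (hc2 : c2 = 3 * a * d ^ 2 * k + a * ks)
    (hc1 : c1 = 3 * a * k - a * d ^ 2 * μ0) (hc0 : c0 = a * μ0 - d)
    (D : ℝ → ℝ)
    (hD : D = fun z => -5 * c3 * z ^ 6 + (c2 + 4 * a * ks) * z ^ 4 - c1 * z ^ 2 - c0)
    (ζ0 : ℝ)
    (hζ0 : ζ0 = ((c2 + 4 * a * ks) -
      Real.sqrt ((c2 + 4 * a * ks) ^ 2 - 15 * c1 * c3)) / (15 * c3))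
    (hdisc : (c2 + 4 * a * ks) ^ 2 - 15 * c1 * c3 ≥ 0)
    (hζ0pos : 0 < ζ0)
    (hDζ0 : 0 < D (Real.sqrt ζ0)) :
    ∀ b : ℝ, ∃! z : ℝ,
      -d * z + Real.tanh (a * z * (-ks * z ^ 4 + k * z ^ 2 + μ0) + b) = 0 :=
  snod_unique_fixed_point_general a d k ks μ0 ha hd hks c3 c2 c1 c0 hc3 hc2 hc1 hc0 D hD ζ0 hζ0
    hdisc hζ0pos hDζ0
end

section
/- Assume ζ₀ ∈ ℝ₊ and D(√ζ₀) > 0, and for each b ∈ ℝ let ẑ_b denote the unique real root of h with input b. Then ẑ_b → 1/d as b → +∞. -/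
open Real Filter

lemma my_tanh_le_one (x : ℝ) : Real.tanh x ≤ 1 := by
  rw [Real.tanh_eq_sinh_div_cosh]
  exact div_le_one_of_le₀ (Real.sinh_lt_cosh x).le (Real.cosh_pos x).le

lemma my_abs_tanh_le_one (x : ℝ) : |Real.tanh x| ≤ 1 := by
  rw [abs_le]
  constructor
  · have := my_tanh_le_one (-x)
    rw [Real.tanh_neg] at this; linarith
  · exact my_tanh_le_one x

lemma my_tanh_mono : Monotone Real.tanh := by
  intro x y hxy
  rw [Real.tanh_eq_sinh_div_cosh, Real.tanh_eq_sinh_div_cosh,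
    div_le_div_iff₀ (Real.cosh_pos x) (Real.cosh_pos y),
    Real.sinh_eq, Real.cosh_eq, Real.sinh_eq, Real.cosh_eq]
  have hx := Real.exp_pos x
  have hy := Real.exp_pos y
  have hxn := Real.exp_pos (-x)
  have hyn := Real.exp_pos (-y)
  have h1 : Real.exp x * Real.exp (-x) = 1 := by
    rw [← Real.exp_add]; simp
  have h2 : Real.exp y * Real.exp (-y) = 1 := by
    rw [← Real.exp_add]; simp
  have hle : Real.exp x ≤ Real.exp y := Real.exp_le_exp.2 hxy
  have hle' : Real.exp (-y) ≤ Real.exp (-x) := Real.exp_le_exp.2 (by linarith)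
  nlinarith [mul_nonneg (sub_nonneg.2 hle) (sub_nonneg.2 hle')]

lemma my_tanh_lb (x : ℝ) : 1 - 2 * Real.exp (-(2*x)) ≤ Real.tanh x := by
  rw [Real.tanh_eq_sinh_div_cosh, Real.sinh_eq, Real.cosh_eq,
    le_div_iff₀ (by positivity : (0:ℝ) < (Real.exp x + Real.exp (-x))/2)]
  have h1 : Real.exp x * Real.exp (-x) = 1 := by rw [← Real.exp_add]; simp
  have h2 : Real.exp (-(2*x)) = Real.exp (-x) * Real.exp (-x) := by
    rw [← Real.exp_add]; ring_nf
  have hx := Real.exp_pos x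
  have hxn := Real.exp_pos (-x)
  rw [h2]
  nlinarith [sq_nonneg (Real.exp (-x))]

lemma my_tanh_tendsto : Tendsto Real.tanh atTop (nhds 1) := by
  have h1 : Tendsto (fun x : ℝ => -(2*x)) atTop atBot :=
    tendsto_neg_atTop_atBot.comp (tendsto_id.const_mul_atTop two_pos)
  have h2 : Tendsto (fun x : ℝ => Real.exp (-(2*x))) atTop (nhds 0) :=
    Real.tendsto_exp_atBot.comp h1
  have hlo : Tendsto (fun x : ℝ => 1 - 2 * Real.exp (-(2*x))) atTop (nhds 1) := by
    have := h2.const_mul 2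
    have := (tendsto_const_nhds (x := (1:ℝ)) (f := atTop)).sub (h2.const_mul 2)
    simpa using this
  exact tendsto_of_tendsto_of_tendsto_of_le_of_le hlo tendsto_const_nhds
    (fun x => my_tanh_lb x) (fun x => my_tanh_le_one x)

/-- Assume `ζ₀ ∈ ℝ₊` and `D(√ζ₀) > 0`, and for each `b ∈ ℝ` let
`ẑ_b` denote the unique real root of `h` with input `b`. Then `ẑ_b → 1/d` as
`b → +∞`. -/
theorem snod_root_tendsto
    (a d k ks ε μ0 : ℝ)
    (ha : 0 < a) (hd : 0 < d) (hk : 0 < k) (hks : 0 < ks) (hε : 0 < ε) (hμ0 : 0 < μ0)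
    (c3 c2 c1 c0 : ℝ)
    (hc3 : c3 = a * d ^ 2 * ks) (hc2 : c2 = 3 * a * d ^ 2 * k + a * ks)
    (hc1 : c1 = 3 * a * k - a * d ^ 2 * μ0) (hc0 : c0 = a * μ0 - d)
    (D : ℝ → ℝ)
    (hD : D = fun z => -5 * c3 * z ^ 6 + (c2 + 4 * a * ks) * z ^ 4 - c1 * z ^ 2 - c0)
    (ζ0 : ℝ)
    (hζ0 : ζ0 = ((c2 + 4 * a * ks) -
      Real.sqrt ((c2 + 4 * a * ks) ^ 2 - 15 * c1 * c3)) / (15 * c3))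
    (hdisc : (c2 + 4 * a * ks) ^ 2 - 15 * c1 * c3 ≥ 0)
    (hζ0pos : 0 < ζ0)
    (hDζ0 : 0 < D (Real.sqrt ζ0))
    (zb : ℝ → ℝ)
    (hroot : ∀ b : ℝ,
      -d * zb b + Real.tanh (a * zb b * (-ks * zb b ^ 4 + k * zb b ^ 2 + μ0) + b) = 0)
    (huniq : ∀ b z : ℝ,
      -d * z + Real.tanh (a * z * (-ks * z ^ 4 + k * z ^ 2 + μ0) + b) = 0 → z = zb b) :
    Filter.Tendsto zb Filter.atTop (nhds (1 / d)) := by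
  set e : ℝ := 1 / d with he
  have hepos : 0 < e := by positivity
  set M : ℝ := a * e * (ks * e ^ 4 + k * e ^ 2 + μ0) with hM
  -- each root satisfies d * zb b = tanh (arg b)
  have heq : ∀ b, d * zb b =
      Real.tanh (a * zb b * (-ks * zb b ^ 4 + k * zb b ^ 2 + μ0) + b) := by
    intro b; have := hroot b; linarith
  have hbound : ∀ b, |zb b| ≤ e := by
    intro b
    have habs := my_abs_tanh_le_one (a * zb b * (-ks * zb b ^ 4 + k * zb b ^ 2 + μ0) + b)
    rw [← heq b, abs_mul, abs_of_pos hd] at habs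
    rw [he, le_div_iff₀ hd]
    linarith [mul_comm (|zb b|) d]
  have hlow : ∀ b, Real.tanh (b - M) ≤ d * zb b := by
    intro b
    set z := zb b with hz
    have hzb := hbound b
    have hz1 : -e ≤ z := (abs_le.1 hzb).1
    have hz2 : z ≤ e := (abs_le.1 hzb).2
    have h2 : z ^ 2 ≤ e ^ 2 := sq_le_sq' (by linarith) hz2
    have h4 : z ^ 4 ≤ e ^ 4 := by nlinarith [sq_nonneg z, sq_nonneg e]
    have hP : |(-ks * z ^ 4 + k * z ^ 2 + μ0)| ≤ ks * e ^ 4 + k * e ^ 2 + μ0 := by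
      rw [abs_le]
      constructor <;> nlinarith [sq_nonneg z, sq_nonneg (z ^ 2), sq_nonneg (z*z)]
    have hprod : |a * z * (-ks * z ^ 4 + k * z ^ 2 + μ0)| ≤ M := by
      rw [abs_mul, abs_mul, abs_of_pos ha, hM]
      gcongr
    have hargge : b - M ≤ a * z * (-ks * z ^ 4 + k * z ^ 2 + μ0) + b := by
      have := neg_abs_le (a * z * (-ks * z ^ 4 + k * z ^ 2 + μ0))
      linarith
    calc Real.tanh (b - M)
        ≤ Real.tanh (a * z * (-ks * z ^ 4 + k * z ^ 2 + μ0) + b) := my_tanh_mono hargge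
      _ = d * z := (heq b).symm
  have hhi : ∀ b, zb b ≤ 1 / d := by
    intro b
    have h1 := my_tanh_le_one (a * zb b * (-ks * zb b ^ 4 + k * zb b ^ 2 + μ0) + b)
    rw [← heq b] at h1
    rw [le_div_iff₀ hd]
    linarith [mul_comm (zb b) d]
  have hlo' : ∀ b, Real.tanh (b - M) / d ≤ zb b := by
    intro b
    rw [div_le_iff₀ hd]
    linarith [hlow b, mul_comm (zb b) d]
  -- squeeze
  have hshift : Filter.Tendsto (fun b : ℝ => b - M) Filter.atTop Filter.atTop :=
    Filter.tendsto_atTop_add_const_right _ (-M) Filter.tendsto_id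
  have hlotend : Filter.Tendsto (fun b : ℝ => Real.tanh (b - M) / d)
      Filter.atTop (nhds (1 / d)) :=
    (my_tanh_tendsto.comp hshift).div_const d
  exact tendsto_of_tendsto_of_tendsto_of_le_of_le hlotend tendsto_const_nhds hlo' hhi
end

section
/- Assume c₀ − ε < 0, ξ₀ ∈ ℝ₊ and T(√ξ₀) > 0. Then there exist z*, z** with 0 < z* < z** < 1/d such that T(z*) = T(z**) = 0, T(z) < 0 for all z ∈ [0, z*) ∪ (z**, 1/d], and T(z) > 0 for all z ∈ (z*, z**). -/
/-!
Substituting `ξ = z²` turns `T` into the cubic `P ξ = c₃ξ³ - c₂ξ² + c₁ξ + (c₀ - ε)` with positive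
leading coefficient. It is negative at `0`, positive at `ξ₀` and equal to `-d - ε < 0` at `1/d²`;
moreover `ξ₀ < 1/d²`, since `ξ₀`, the smaller root of `P'`, satisfies `c₂ξ₀ ≤ c₁`, while
`c₁d² < c₂`. The intermediate value theorem gives roots `r < ξ₀ < s < 1/d²` of `P`, and writing
`P ξ = c₃(ξ - r)(ξ - s)(ξ - t)` the sign `P(1/d²) < 0` forces `t > 1/d²`, which determines the sign
of `P` on `[0, 1/d²]`. Take `z* = √r` and `z** = √s`.
-/

open Set

theorem cubic_eq_mul_of_two_roots {a b c e r s : ℝ} (ha : a ≠ 0) (hrs : r ≠ s)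
    (hr : a * r ^ 3 + b * r ^ 2 + c * r + e = 0) (hs : a * s ^ 3 + b * s ^ 2 + c * s + e = 0) :
    ∃ t, ∀ x, a * x ^ 3 + b * x ^ 2 + c * x + e = a * (x - r) * (x - s) * (x - t) := by
  have hquad : a * s ^ 2 + (a * r + b) * s + (a * r ^ 2 + b * r + c) = 0 := by
    have h : (s - r) * (a * s ^ 2 + (a * r + b) * s + (a * r ^ 2 + b * r + c)) = 0 := by
      linear_combination hs - hr
    exact (mul_eq_zero.1 h).resolve_left (sub_ne_zero.2 hrs.symm)
  refine ⟨-b / a - r - s, fun x => ?_⟩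
  have hlin : a * (x - (-b / a - r - s)) = a * x + b + a * r + a * s := by field_simp; ring
  rw [show a * (x - r) * (x - s) * (x - (-b / a - r - s))
      = (x - r) * (x - s) * (a * (x - (-b / a - r - s))) by ring, hlin]
  linear_combination hr + (x - r) * hquad

theorem exists_roots_sign_pattern_of_cubic {a b c e u v w : ℝ} {p : ℝ → ℝ} (ha : 0 < a)
    (hp : ∀ x, p x = a * x ^ 3 + b * x ^ 2 + c * x + e) (huv : u < v) (hvw : v < w)
    (hu : p u < 0) (hv : 0 < p v) (hw : p w < 0) :
    ∃ r s, r ∈ Ioo u v ∧ s ∈ Ioo v w ∧ p r = 0 ∧ p s = 0 ∧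
      (∀ x < r, p x < 0) ∧ (∀ x ∈ Ioo r s, 0 < p x) ∧ (∀ x ∈ Ioc s w, p x < 0) := by
  have hcont : Continuous p := by rw [show p = _ from funext hp]; fun_prop
  obtain ⟨r, hr, hpr⟩ := intermediate_value_Ioo huv.le hcont.continuousOn ⟨hu, hv⟩
  obtain ⟨s, hs, hps⟩ := intermediate_value_Ioo' hvw.le hcont.continuousOn ⟨hw, hv⟩
  have hrs : r < s := hr.2.trans hs.1
  obtain ⟨t, ht⟩ := cubic_eq_mul_of_two_roots ha.ne' hrs.ne ((hp r).symm.trans hpr)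
    ((hp s).symm.trans hps)
  have hfac : ∀ x, p x = a * (x - r) * (x - s) * (x - t) := fun x => (hp x).trans (ht x)
  have hwt : w < t := by
    have hw' : a * (w - r) * (w - s) * (w - t) < 0 := hfac w ▸ hw
    have hpos : 0 < a * (w - r) * (w - s) :=
      mul_pos (mul_pos ha (by linarith [hs.2])) (by linarith [hs.2])
    exact sub_neg.1 (neg_of_mul_neg_right hw' hpos.le)
  refine ⟨r, s, hr, hs, hpr, hps, fun x hx => ?_, fun x hx => ?_, fun x hx => ?_⟩
  · rw [hfac]
    exact mul_neg_of_pos_of_neg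
      (mul_pos_of_neg_of_neg (mul_neg_of_pos_of_neg ha (by linarith)) (by linarith))
      (by linarith [hs.2])
  · rw [hfac]
    exact mul_pos_of_neg_of_neg
      (mul_neg_of_pos_of_neg (mul_pos ha (by linarith [hx.1])) (by linarith [hx.2]))
      (by linarith [hx.2, hs.2])
  · rw [hfac]
    exact mul_neg_of_pos_of_neg
      (mul_pos (mul_pos ha (by linarith [hx.1])) (by linarith [hx.1]))
      (by linarith [hx.2])

/-- `x` is the smaller root of `Ax² - 2Bx + C`, and `C - Bx = x √(B² - AC) ≥ 0`. -/
theorem mul_le_of_eq_smaller_root {A B C x : ℝ} (hA : A ≠ 0) (hdisc : 0 ≤ B ^ 2 - A * C)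
    (hx : x = (B - √(B ^ 2 - A * C)) / A) (hx0 : 0 ≤ x) : B * x ≤ C := by
  have hxA : x * A = B - √(B ^ 2 - A * C) := by rw [hx]; field_simp
  have hsq : √(B ^ 2 - A * C) ^ 2 = B ^ 2 - A * C := Real.sq_sqrt hdisc
  have hid : C - B * x = x * √(B ^ 2 - A * C) := by
    refine mul_left_cancel₀ hA ?_
    linear_combination (-B - √(B ^ 2 - A * C)) * hxA + hsq
  nlinarith [mul_nonneg hx0 (Real.sqrt_nonneg (B ^ 2 - A * C))]

/-- Assume `c₀ − ε < 0`, `ξ₀ ∈ ℝ₊` (i.e. `c₂² − 3·c₁·c₃ ≥ 0` and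
`ξ₀ > 0`) and `T(√ξ₀) > 0`. Then there exist `z*, z**` with `0 < z* < z** < 1/d`
such that `T(z*) = T(z**) = 0`, `T(z) < 0` for all `z ∈ [0, z*) ∪ (z**, 1/d]`,
and `T(z) > 0` for all `z ∈ (z*, z**)`. -/
theorem snod_trace_roots
    (a d k ks ε μ0 : ℝ)
    (ha : 0 < a) (hd : 0 < d) (hk : 0 < k) (hks : 0 < ks) (hε : 0 < ε) (hμ0 : 0 < μ0)
    (c3 c2 c1 c0 : ℝ)
    (hc3 : c3 = a * d ^ 2 * ks) (hc2 : c2 = 3 * a * d ^ 2 * k + a * ks)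
    (hc1 : c1 = 3 * a * k - a * d ^ 2 * μ0) (hc0 : c0 = a * μ0 - d)
    (T : ℝ → ℝ)
    (hT : T = fun z => c3 * z ^ 6 - c2 * z ^ 4 + c1 * z ^ 2 + c0 - ε)
    (hc0ε : c0 - ε < 0)
    (ξ0 : ℝ)
    (hξ0 : ξ0 = (c2 - Real.sqrt (c2 ^ 2 - 3 * c1 * c3)) / (3 * c3))
    (hdisc : c2 ^ 2 - 3 * c1 * c3 ≥ 0)
    (hξ0pos : 0 < ξ0)
    (hTξ0 : 0 < T (Real.sqrt ξ0)) :
    ∃ zs zss : ℝ, 0 < zs ∧ zs < zss ∧ zss < 1 / d ∧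
      T zs = 0 ∧ T zss = 0 ∧
      (∀ z, z ∈ Set.Ico (0 : ℝ) zs ∪ Set.Ioc zss (1 / d) → T z < 0) ∧
      (∀ z, z ∈ Set.Ioo zs zss → 0 < T z) := by
  set P : ℝ → ℝ := fun ξ => c3 * ξ ^ 3 + -c2 * ξ ^ 2 + c1 * ξ + (c0 - ε) with hP
  have hTP : ∀ z, T z = P (z ^ 2) := fun z => by simp only [hT, hP]; ring
  have hc3pos : 0 < c3 := by rw [hc3]; positivity
  have hc2pos : 0 < c2 := by rw [hc2]; positivity
  have hc2ξ0 : c2 * ξ0 ≤ c1 := mul_le_of_eq_smaller_root (A := 3 * c3) (by positivity)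
    (by linarith) (by rw [hξ0, show c2 ^ 2 - 3 * c1 * c3 = c2 ^ 2 - 3 * c3 * c1 by ring])
    hξ0pos.le
  have hc1d : c1 * d ^ 2 < c2 := by
    rw [hc1, hc2]; nlinarith [mul_pos ha hks, mul_pos (mul_pos ha (pow_pos hd 4)) hμ0]
  have hξ0d : ξ0 < (1 / d) ^ 2 := by
    rw [div_pow, one_pow, lt_div_iff₀ (by positivity)]
    nlinarith [mul_le_mul_of_nonneg_right hc2ξ0 (sq_nonneg d)]
  have hP0 : P 0 < 0 := by simpa [hP] using hc0ε
  have hPξ0 : 0 < P ξ0 := by rwa [hTP, Real.sq_sqrt hξ0pos.le] at hTξ0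
  have hPd : P ((1 / d) ^ 2) = -d - ε := by
    simp only [hP, hc3, hc2, hc1, hc0]; field_simp; ring
  obtain ⟨r, s, hr, hs, hPr, hPs, hneg, hpos, hneg'⟩ := exists_roots_sign_pattern_of_cubic (p := P)
    hc3pos (fun _ => rfl) hξ0pos hξ0d hP0 hPξ0 (by linarith)
  refine ⟨√r, √s, Real.sqrt_pos.2 hr.1, Real.sqrt_lt_sqrt hr.1.le (hr.2.trans hs.1),
    (Real.sqrt_lt' (by positivity)).2 hs.2, by rw [hTP, Real.sq_sqrt hr.1.le, hPr],
    by rw [hTP, Real.sq_sqrt (hr.1.trans (hr.2.trans hs.1)).le, hPs], ?_, ?_⟩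
  · rintro z (⟨hz0, hzr⟩ | ⟨hsz, hzd⟩)
    · rw [hTP]; exact hneg _ ((Real.lt_sqrt hz0).1 hzr)
    · have hz0 : 0 < z := (Real.sqrt_nonneg s).trans_lt hsz
      rw [hTP]; exact hneg' _ ⟨(Real.sqrt_lt' hz0).1 hsz, pow_le_pow_left₀ hz0.le hzd 2⟩
  · rintro z ⟨hrz, hzs⟩
    have hz0 : 0 < z := (Real.sqrt_nonneg r).trans_lt hrz
    rw [hTP]; exact hpos _ ⟨(Real.sqrt_lt' hz0).1 hrz, (Real.lt_sqrt hz0.le).1 hzs⟩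
end

section
/- The box B = [−1/d, 1/d] × [−1, kₛ/d⁴] is forward invariant for the S-NOD dynamics: if z, s : ℝ → ℝ are differentiable functions satisfying z′(t) = −d·z(t) + tanh(a·z(t)·(k·z(t)² + μ₀ − s(t)) + b) and s′(t) = ε·(−s(t) + kₛ·z(t)⁴) for all t, and (z(0), s(0)) ∈ B, then (z(t), s(t)) ∈ B for all t ≥ 0. -/
/-! Each of the four faces of the box comes with a scalar differential inequality
`f' ≤ c (M - f)`, which keeps `f ≤ M` forever because `(f - M) e^{ct}` is antitone.
Since `|tanh| < 1`, `z' ≤ d (1/d - z)` and `-z' ≤ d (1/d + z)`; since `kₛ z⁴ ≥ 0`,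
`-s' ≤ ε (1 + s)`; and once `|z| ≤ 1/d` is known, `s' ≤ ε (kₛ/d⁴ - s)`. -/

open Real

theorem le_of_hasDerivAt_le_mul_sub {f f' : ℝ → ℝ} {c M : ℝ}
    (hf : ∀ t, HasDerivAt f (f' t) t) (hf' : ∀ t, 0 ≤ t → f' t ≤ c * (M - f t))
    (h0 : f 0 ≤ M) : ∀ t, 0 ≤ t → f t ≤ M := by
  let g : ℝ → ℝ := fun t ↦ (f t - M) * exp (c * t)
  have hg : ∀ t, HasDerivAt g ((f' t + c * (f t - M)) * exp (c * t)) t := fun t ↦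
    (((hf t).sub_const M).mul ((hasDerivAt_id' t).const_mul c).exp).congr_deriv (by ring)
  have hg_anti : AntitoneOn g (Set.Ici 0) := by
    refine antitoneOn_of_hasDerivWithinAt_nonpos (convex_Ici 0)
      (fun t _ ↦ (hg t).continuousAt.continuousWithinAt) (fun t _ ↦ (hg t).hasDerivWithinAt)
      fun t ht ↦ ?_
    rw [interior_Ici] at ht
    nlinarith [hf' t (le_of_lt ht), exp_pos (c * t)]
  intro t ht
  have : (f t - M) * exp (c * t) ≤ f 0 - M := by
    simpa [g] using hg_anti Set.self_mem_Ici ht ht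
  nlinarith [exp_pos (c * t)]

theorem snod_box_forward_invariant_general
    (a d k ks ε μ0 b : ℝ)
    (hd : 0 < d) (hks : 0 < ks) (hε : 0 < ε)
    (z s : ℝ → ℝ)
    (hz : ∀ t : ℝ, HasDerivAt z
      (-d * z t + Real.tanh (a * z t * (k * z t ^ 2 + μ0 - s t) + b)) t)
    (hs : ∀ t : ℝ, HasDerivAt s (ε * (-s t + ks * z t ^ 4)) t)
    (h0 : (z 0, s 0) ∈ Set.Icc (-(1 / d)) (1 / d) ×ˢ Set.Icc (-1 : ℝ) (ks / d ^ 4)) :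
    ∀ t : ℝ, 0 ≤ t →
      (z t, s t) ∈ Set.Icc (-(1 / d)) (1 / d) ×ˢ Set.Icc (-1 : ℝ) (ks / d ^ 4) := by
  simp only [Set.mem_prod, Set.mem_Icc] at h0 ⊢
  obtain ⟨⟨hz₀_ge, hz₀_le⟩, hs₀_ge, hs₀_le⟩ := h0
  have htanh : ∀ t, |tanh (a * z t * (k * z t ^ 2 + μ0 - s t) + b)| < 1 :=
    fun t ↦ abs_tanh_lt_one _
  have hd_mul : ∀ x, d * (1 / d - x) = 1 - d * x := fun x ↦ by field_simp
  have hz_le : ∀ t, 0 ≤ t → z t ≤ 1 / d :=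
    le_of_hasDerivAt_le_mul_sub hz
      (fun t _ ↦ by rw [hd_mul]; linarith [(abs_lt.1 (htanh t)).2])
      hz₀_le
  have hz_ge : ∀ t, 0 ≤ t → -z t ≤ 1 / d :=
    le_of_hasDerivAt_le_mul_sub (fun t ↦ (hz t).neg)
      (fun t _ ↦ by rw [hd_mul]; linarith [(abs_lt.1 (htanh t)).1])
      (by linarith)
  have hz_pow : ∀ t, 0 ≤ t → ks * z t ^ 4 ≤ ks / d ^ 4 := fun t ht ↦ by
    have : |z t| ^ 4 ≤ (1 / d) ^ 4 :=
      pow_le_pow_left₀ (abs_nonneg _) (abs_le.2 ⟨by linarith [hz_ge t ht], hz_le t ht⟩) 4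
    rw [Even.pow_abs ⟨2, rfl⟩] at this
    calc ks * z t ^ 4 ≤ ks * (1 / d) ^ 4 := by gcongr
      _ = ks / d ^ 4 := by ring
  have hs_ge : ∀ t, 0 ≤ t → -s t ≤ 1 :=
    le_of_hasDerivAt_le_mul_sub (c := ε) (fun t ↦ (hs t).neg)
      (fun t _ ↦ by
        have : 0 ≤ ks * z t ^ 4 := by positivity
        nlinarith) (by linarith)
  have hs_le : ∀ t, 0 ≤ t → s t ≤ ks / d ^ 4 :=
    le_of_hasDerivAt_le_mul_sub (c := ε) hs (fun t ht ↦ by nlinarith [hz_pow t ht]) hs₀_le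
  exact fun t ht ↦ ⟨⟨by linarith [hz_ge t ht], hz_le t ht⟩, by linarith [hs_ge t ht], hs_le t ht⟩

/-- The box `B = [−1/d, 1/d] × [−1, kₛ/d⁴]` is forward invariant
for the S-NOD dynamics: if `z, s : ℝ → ℝ` are differentiable functions satisfying
`z′(t) = −d·z(t) + tanh(a·z(t)·(k·z(t)² + μ₀ − s(t)) + b)` and
`s′(t) = ε·(−s(t) + kₛ·z(t)⁴)` for all `t`, and `(z(0), s(0)) ∈ B`, then
`(z(t), s(t)) ∈ B` for all `t ≥ 0`. -/
theorem snod_box_forward_invariant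
    (a d k ks ε μ0 b : ℝ)
    (ha : 0 < a) (hd : 0 < d) (hk : 0 < k) (hks : 0 < ks) (hε : 0 < ε) (hμ0 : 0 < μ0)
    (z s : ℝ → ℝ)
    (hz : ∀ t : ℝ, HasDerivAt z
      (-d * z t + Real.tanh (a * z t * (k * z t ^ 2 + μ0 - s t) + b)) t)
    (hs : ∀ t : ℝ, HasDerivAt s (ε * (-s t + ks * z t ^ 4)) t)
    (h0 : (z 0, s 0) ∈ Set.Icc (-(1 / d)) (1 / d) ×ˢ Set.Icc (-1 : ℝ) (ks / d ^ 4)) :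
    ∀ t : ℝ, 0 ≤ t →
      (z t, s t) ∈ Set.Icc (-(1 / d)) (1 / d) ×ˢ Set.Icc (-1 : ℝ) (ks / d ^ 4) :=
  snod_box_forward_invariant_general a d k ks ε μ0 b hd hks hε z s hz hs h0
end

section
/- Assume b = 0. If z, s : ℝ → ℝ are differentiable functions satisfying z′(t) = −d·z(t) + tanh(a·z(t)·(k·z(t)² + μ₀ − s(t))) and s′(t) = ε·(−s(t) + kₛ·z(t)⁴) for all t ∈ ℝ, and z(0) = 0, then z(t) = 0 for all t ∈ ℝ; that is, for zero input the line {z = 0} is invariant under the S-NOD dynamics. -/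
/-!
Whatever `s` does, `tanh` vanishes at `0` and `|tanh y| ≤ |y|`, so along the trajectory
`|ż| ≤ (|d| + |a| |k z² + μ₀ − s|) |z|` with a continuous coefficient. Grönwall's inequality,
applied forward and backward in time from `z(0) = 0`, then forces `z ≡ 0`.
-/

open Set

namespace Real

theorem sinh_le_mul_cosh {x : ℝ} (hx : 0 ≤ x) : sinh x ≤ x * cosh x := by
  let g : ℝ → ℝ := fun u => u * cosh u - sinh u
  have hg : ∀ u, HasDerivAt g (u * sinh u) u := fun u =>
    (((hasDerivAt_id' u).mul (hasDerivAt_cosh u)).sub (hasDerivAt_sinh u)).congr_deriv (by ring)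
  have hmono : MonotoneOn g (Ici 0) :=
    monotoneOn_of_hasDerivWithinAt_nonneg (convex_Ici 0)
      (fun u _ => (hg u).continuousAt.continuousWithinAt)
      (fun u _ => (hg u).hasDerivWithinAt)
      (fun u hu => by
        rw [interior_Ici, mem_Ioi] at hu
        exact mul_nonneg hu.le (sinh_nonneg_iff.2 hu.le))
  have := hmono self_mem_Ici (mem_Ici.2 hx) hx
  simp only [g, zero_mul, sinh_zero, sub_zero] at this
  linarith

theorem tanh_le_self {x : ℝ} (hx : 0 ≤ x) : tanh x ≤ x := by
  rw [tanh_eq_sinh_div_cosh, div_le_iff₀ (cosh_pos x)]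
  exact sinh_le_mul_cosh hx

theorem abs_tanh (x : ℝ) : |tanh x| = tanh |x| := by
  rw [tanh_eq_sinh_div_cosh, tanh_eq_sinh_div_cosh, abs_div, abs_sinh, cosh_abs,
    abs_of_pos (cosh_pos x)]

theorem abs_tanh_le_abs (x : ℝ) : |tanh x| ≤ |x| :=
  (abs_tanh x).trans_le (tanh_le_self (abs_nonneg x))

end Real

section Gronwall

variable {E : Type*} [NormedAddCommGroup E] [NormedSpace ℝ E] {f f' : ℝ → E} {C : ℝ → ℝ}

theorem eq_zero_of_norm_deriv_le_mul_norm_of_le (hC : Continuous C)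
    (hf : ∀ t, HasDerivAt f (f' t) t) (bound : ∀ t, ‖f' t‖ ≤ C t * ‖f t‖) {t₀ : ℝ}
    (h₀ : f t₀ = 0) {t : ℝ} (ht : t₀ ≤ t) : f t = 0 := by
  obtain ⟨K, hK⟩ := isCompact_Icc.bddAbove_image (hC.continuousOn (s := Icc t₀ t))
  refine eq_zero_of_abs_deriv_le_mul_abs_self_of_eq_zero_right (K := K)
    (fun u _ => (hf u).continuousAt.continuousWithinAt) (fun u _ => (hf u).hasDerivWithinAt)
    h₀ (fun u hu => ?_) t ⟨ht, le_rfl⟩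
  exact (bound u).trans <|
    mul_le_mul_of_nonneg_right (hK (mem_image_of_mem C (Ico_subset_Icc_self hu))) (norm_nonneg _)

theorem eq_zero_of_norm_deriv_le_mul_norm (hC : Continuous C)
    (hf : ∀ t, HasDerivAt f (f' t) t) (bound : ∀ t, ‖f' t‖ ≤ C t * ‖f t‖) {t₀ : ℝ}
    (h₀ : f t₀ = 0) (t : ℝ) : f t = 0 := by
  rcases le_total t₀ t with ht | ht
  · exact eq_zero_of_norm_deriv_le_mul_norm_of_le hC hf bound h₀ ht
  · have hf_neg : ∀ u, HasDerivAt (fun u => f (-u)) (-f' (-u)) u := fun u => by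
      simpa [Function.comp_def] using (hf (-u)).scomp u (hasDerivAt_neg u)
    simpa using eq_zero_of_norm_deriv_le_mul_norm_of_le (hC.comp continuous_neg) hf_neg
      (fun u => by simpa using bound (-u)) (t₀ := -t₀) (by simpa using h₀) (neg_le_neg ht)

end Gronwall

theorem abs_neg_mul_add_tanh_mul_le (a d m x : ℝ) :
    |-d * x + Real.tanh (a * x * m)| ≤ (|d| + |a| * |m|) * |x| :=
  calc |-d * x + Real.tanh (a * x * m)|
      ≤ |-d * x| + |a * x * m| :=
        (abs_add_le _ _).trans (add_le_add_right (Real.abs_tanh_le_abs _) _)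
    _ = (|d| + |a| * |m|) * |x| := by simp only [abs_mul, abs_neg]; ring

theorem snod_zero_line_invariant_general
    (a d k ks ε μ0 : ℝ)
    (z s : ℝ → ℝ)
    (hz : ∀ t : ℝ, HasDerivAt z
      (-d * z t + Real.tanh (a * z t * (k * z t ^ 2 + μ0 - s t))) t)
    (hs : ∀ t : ℝ, HasDerivAt s (ε * (-s t + ks * z t ^ 4)) t)
    (h0 : z 0 = 0) :
    ∀ t : ℝ, z t = 0 := by
  have hz_cont : Continuous z := continuous_iff_continuousAt.2 fun t => (hz t).continuousAt
  have hs_cont : Continuous s := continuous_iff_continuousAt.2 fun t => (hs t).continuousAt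
  refine eq_zero_of_norm_deriv_le_mul_norm (C := fun t => |d| + |a| * |k * z t ^ 2 + μ0 - s t|)
    (by fun_prop) hz (fun t => ?_) h0
  simpa only [Real.norm_eq_abs] using abs_neg_mul_add_tanh_mul_le a d _ (z t)

/-- Assume zero input `b = 0`. If `z, s : ℝ → ℝ` are differentiable
functions satisfying the S-NOD equations
`z′(t) = −d·z(t) + tanh(a·z(t)·(k·z(t)² + μ₀ − s(t)))` and
`s′(t) = ε·(−s(t) + kₛ·z(t)⁴)` for all `t ∈ ℝ`, and `z(0) = 0`, then `z(t) = 0` for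
all `t ∈ ℝ`; that is, for zero input the line `{z = 0}` is invariant under the
S-NOD dynamics. -/
theorem snod_zero_line_invariant
    (a d k ks ε μ0 : ℝ)
    (ha : 0 < a) (hd : 0 < d) (hk : 0 < k) (hks : 0 < ks) (hε : 0 < ε) (hμ0 : 0 < μ0)
    (z s : ℝ → ℝ)
    (hz : ∀ t : ℝ, HasDerivAt z
      (-d * z t + Real.tanh (a * z t * (k * z t ^ 2 + μ0 - s t))) t)
    (hs : ∀ t : ℝ, HasDerivAt s (ε * (-s t + ks * z t ^ 4)) t)
    (h0 : z 0 = 0) :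
    ∀ t : ℝ, z t = 0 :=
  snod_zero_line_invariant_general a d k ks ε μ0 z s hz hs h0
end

section
/- Assume b = 0, a·μ₀ ≥ d and 3·a·k > d³. Then h has exactly three real roots; more precisely, there exists ẑ with 0 < ẑ < 1/d such that the set of real roots of h is {−ẑ, 0, ẑ}. -/
/-!
A positive root of `h` satisfies `tanh (ψ z) = d z`, so `z < 1 / d` and `artanh (d z) = ψ z`:
the positive roots are the zeros of `M z = (artanh (d z) - ψ z) / z³` on `(0, 1 / d)`. Writing
`M z = d³ G (d z) + (d - a μ₀) / z² - a k + a kₛ z²` with `G x = (artanh x - x) / x³`, which is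
nondecreasing on `(0, 1)`, and using `a μ₀ ≥ d`, `M` is strictly increasing. The bound
`artanh x ≤ x + x³ / (3 (1 - x²))` makes `M` eventually below `d³ / 3 - a k < 0` as `z → 0⁺`,
and `M` is positive where `artanh (d z)` is large, so `M` has exactly one zero `ẑ`.
Since `h` is odd, its roots are `-ẑ, 0, ẑ`.
-/

open Real Set

namespace Real

theorem hasDerivAt_artanh_s15 {x : ℝ} (hx : x ∈ Ioo (-1) 1) :
    HasDerivAt artanh (1 - x ^ 2)⁻¹ x := by
  have h := hasDerivAt_half_log_one_add_div_one_sub_sub_sum_range 0 hx.1 hx.2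
  simp only [Finset.range_zero, Finset.sum_empty, sub_zero, pow_zero, one_div] at h
  refine h.congr_of_eventuallyEq ?_
  filter_upwards [isOpen_Ioo.mem_nhds hx] with y hy
  rw [artanh_eq_half_log (Ioo_subset_Icc_self hy), one_div]

theorem continuousOn_artanh : ContinuousOn artanh (Ioo (-1) 1) :=
  fun _ hx => (hasDerivAt_artanh_s15 hx).continuousAt.continuousWithinAt

theorem artanh_le_add_cube_div {x : ℝ} (h0 : 0 ≤ x) (h1 : x < 1) :
    artanh x ≤ x + x ^ 3 / (3 * (1 - x ^ 2)) := by
  set g : ℝ → ℝ := fun t => t + t ^ 3 / (3 * (1 - t ^ 2)) - artanh t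
  have hg : ∀ t ∈ Ioo (-1 : ℝ) 1, HasDerivAt g (2 * t ^ 4 / (3 * (1 - t ^ 2) ^ 2)) t := by
    intro t ht
    have hsq : 1 - t ^ 2 ≠ 0 := by nlinarith [ht.1, ht.2]
    have hcube := (hasDerivAt_pow 3 t).div (((hasDerivAt_pow 2 t).const_sub 1).const_mul 3)
      (mul_ne_zero three_ne_zero hsq)
    refine (((hasDerivAt_id t).add hcube).sub (hasDerivAt_artanh_s15 ht)).congr_deriv ?_
    field_simp
    ring
  have hmono : MonotoneOn g (Ioo (-1) 1) := by
    refine monotoneOn_of_hasDerivWithinAt_nonneg (convex_Ioo _ _)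
      (f' := fun t => 2 * t ^ 4 / (3 * (1 - t ^ 2) ^ 2))
      (fun t ht => (hg t ht).continuousAt.continuousWithinAt) (fun t ht => ?_)
      (fun t _ => by positivity)
    rw [interior_Ioo] at ht ⊢
    exact (hg t ht).hasDerivWithinAt
  have := hmono ⟨by norm_num, by norm_num⟩ ⟨by linarith, h1⟩ h0
  simp only [g, artanh_zero] at this
  norm_num at this
  linarith

theorem monotoneOn_artanh_sub_div_cube :
    MonotoneOn (fun x => (artanh x - x) / x ^ 3) (Ioo 0 1) := by
  have hG : ∀ x ∈ Ioo (0 : ℝ) 1, HasDerivAt (fun x => (artanh x - x) / x ^ 3)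
      ((((1 - x ^ 2)⁻¹ - 1) * x ^ 3 - (artanh x - x) * (3 * x ^ 2)) / (x ^ 3) ^ 2) x := by
    intro x hx
    refine (((hasDerivAt_artanh_s15 ⟨by linarith [hx.1], hx.2⟩).sub (hasDerivAt_id x)).div
      (hasDerivAt_pow 3 x) (pow_ne_zero 3 hx.1.ne')).congr_deriv ?_
    norm_num
  refine monotoneOn_of_hasDerivWithinAt_nonneg (convex_Ioo _ _)
    (f' := fun x => (((1 - x ^ 2)⁻¹ - 1) * x ^ 3 - (artanh x - x) * (3 * x ^ 2)) / (x ^ 3) ^ 2)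
    (fun x hx => (hG x hx).continuousAt.continuousWithinAt) (fun x hx => ?_) (fun x hx => ?_)
  · rw [interior_Ioo] at hx ⊢
    exact (hG x hx).hasDerivWithinAt
  rw [interior_Ioo] at hx
  obtain ⟨hx0, hx1⟩ := hx
  have hsq : 0 < 1 - x ^ 2 := by nlinarith
  have key : (artanh x - x) * (3 * x ^ 2) ≤ ((1 - x ^ 2)⁻¹ - 1) * x ^ 3 := by
    have : ((1 - x ^ 2)⁻¹ - 1) * x ^ 3 = x ^ 3 / (3 * (1 - x ^ 2)) * (3 * x ^ 2) := by
      field_simp; ring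
    rw [this]
    gcongr
    linarith [artanh_le_add_cube_div hx0.le hx1]
  have := sub_nonneg.2 key
  positivity

end Real

theorem Function.Odd.setOf_eq_zero_eq {α β : Type*} [AddCommGroup α] [LinearOrder α]
    [IsOrderedAddMonoid α] [AddCommGroup β] [IsAddTorsionFree β] {f : α → β}
    (hf : Function.Odd f) {r : α} (hr : 0 < r)
    (hpos : ∀ z, 0 < z → (f z = 0 ↔ z = r)) : {z | f z = 0} = {-r, 0, r} := by
  ext z
  simp only [mem_ofPred_eq, mem_insert_iff, mem_singleton_iff]
  rcases lt_trichotomy z 0 with hz | rfl | hz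
  · rw [← neg_eq_zero, ← hf, hpos (-z) (neg_pos.2 hz), neg_eq_iff_eq_neg]
    constructor
    · exact Or.inl
    · rintro (h | h | h) <;> first | exact h | grind
  · simpa using hf.map_zero
  · rw [hpos z hz]
    constructor
    · exact fun h => Or.inr (Or.inr h)
    · rintro (h | h | h) <;> first | exact h | grind

theorem IsPreconnected.exists_forall_eq_iff_of_injOn {X α : Type*} [TopologicalSpace X]
    [LinearOrder α] [TopologicalSpace α] [OrderClosedTopology α] {s : Set X} {f : X → α}
    (hs : IsPreconnected s) (hf : ContinuousOn f s) (hinj : InjOn f s) {x y : X} {c : α}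
    (hx : x ∈ s) (hy : y ∈ s) (hfx : f x ≤ c) (hfy : c ≤ f y) :
    ∃ z ∈ s, ∀ w ∈ s, f w = c ↔ w = z := by
  obtain ⟨z, hz, hfz⟩ := hs.intermediate_value hx hy hf ⟨hfx, hfy⟩
  exact ⟨z, hz, fun w hw => ⟨fun h => hinj hw hz (h.trans hfz.symm), fun h => h ▸ hfz⟩⟩

noncomputable section SNOD

variable (a d k ks μ0 : ℝ)

def snodPsi (z : ℝ) : ℝ := a * z * (-ks * z ^ 4 + k * z ^ 2 + μ0)

def snodH (z : ℝ) : ℝ := -d * z + tanh (snodPsi a k ks μ0 z)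

def snodM (z : ℝ) : ℝ := (artanh (d * z) - snodPsi a k ks μ0 z) / z ^ 3

theorem snodH_odd : Function.Odd (snodH a d k ks μ0) := by
  intro z
  simp only [snodH, snodPsi]
  rw [show a * -z * (-ks * (-z) ^ 4 + k * (-z) ^ 2 + μ0)
      = -(a * z * (-ks * z ^ 4 + k * z ^ 2 + μ0)) by ring, tanh_neg]
  ring

variable {a d k ks μ0}

theorem mul_mem_Ioo_zero_one (hd : 0 < d) {z : ℝ} (hz : z ∈ Ioo 0 (1 / d)) : d * z ∈ Ioo 0 1 :=
  ⟨mul_pos hd hz.1, by rw [← lt_div_iff₀' hd]; exact hz.2⟩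

theorem snodH_eq_zero_iff (hd : 0 < d) {z : ℝ} (hz : 0 < z) :
    snodH a d k ks μ0 z = 0 ↔ z < 1 / d ∧ snodM a d k ks μ0 z = 0 := by
  rw [snodH, snodM, div_eq_zero_iff, sub_eq_zero, lt_div_iff₀ hd, mul_comm z d]
  simp only [pow_ne_zero 3 hz.ne', or_false, neg_mul, neg_add_eq_zero]
  constructor
  · intro h
    exact ⟨h ▸ tanh_lt_one _, by rw [h, artanh_tanh]⟩
  · rintro ⟨hdz, h⟩
    rw [← h, tanh_artanh ⟨by linarith [mul_pos hd hz], hdz⟩]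

theorem snodM_eq (hd : d ≠ 0) {z : ℝ} (hz : z ≠ 0) :
    snodM a d k ks μ0 z = d ^ 3 * ((artanh (d * z) - d * z) / (d * z) ^ 3)
      + (d - a * μ0) / z ^ 2 - a * k + a * ks * z ^ 2 := by
  simp only [snodM, snodPsi]
  field_simp
  ring

theorem strictMonoOn_snodM (ha : 0 < a) (hd : 0 < d) (hks : 0 < ks) (hcrit : d ≤ a * μ0) :
    StrictMonoOn (snodM a d k ks μ0) (Ioo 0 (1 / d)) := by
  intro x hx y hy hxy
  have hartanh := monotoneOn_artanh_sub_div_cube (mul_mem_Ioo_zero_one hd hx)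
    (mul_mem_Ioo_zero_one hd hy)
    (mul_le_mul_of_nonneg_left hxy.le hd.le)
  have hsq : x ^ 2 < y ^ 2 := pow_lt_pow_left₀ hxy hx.1.le two_ne_zero
  have hcritTerm : (d - a * μ0) / x ^ 2 ≤ (d - a * μ0) / y ^ 2 := by
    have := div_le_div_of_nonneg_left (sub_nonneg.2 hcrit) (pow_pos hx.1 2) hsq.le
    rw [← neg_sub, neg_div, neg_div]
    exact neg_le_neg this
  have hksTerm : a * ks * x ^ 2 < a * ks * y ^ 2 := mul_lt_mul_of_pos_left hsq (mul_pos ha hks)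
  rw [snodM_eq hd.ne' hx.1.ne', snodM_eq hd.ne' hy.1.ne']
  have := mul_le_mul_of_nonneg_left hartanh (pow_pos hd 3).le
  dsimp only at this
  linarith

theorem continuousOn_snodM (hd : 0 < d) : ContinuousOn (snodM a d k ks μ0) (Ioo 0 (1 / d)) := by
  have hartanh : ContinuousOn (fun z => artanh (d * z)) (Ioo 0 (1 / d)) :=
    continuousOn_artanh.comp (continuous_const.mul continuous_id).continuousOn fun z hz =>
      Ioo_subset_Ioo_left neg_one_lt_zero.le (mul_mem_Ioo_zero_one hd hz)
  exact (hartanh.sub (by unfold snodPsi; fun_prop)).div (by fun_prop)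
    fun z hz => pow_ne_zero 3 hz.1.ne'

theorem snodM_le (hd : 0 < d) (hcrit : d ≤ a * μ0) {z : ℝ} (hz : z ∈ Ioo 0 (1 / d)) :
    snodM a d k ks μ0 z ≤ d ^ 3 / (3 * (1 - (d * z) ^ 2)) - a * k + a * ks * z ^ 2 := by
  have hdz := mul_mem_Ioo_zero_one hd hz
  have hartanh : (artanh (d * z) - d * z) / (d * z) ^ 3 ≤ 1 / (3 * (1 - (d * z) ^ 2)) := by
    rw [div_le_iff₀ (pow_pos hdz.1 3), one_div_mul_eq_div]
    linarith [artanh_le_add_cube_div hdz.1.le hdz.2]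
  have hcritTerm : (d - a * μ0) / z ^ 2 ≤ 0 :=
    div_nonpos_of_nonpos_of_nonneg (sub_nonpos.2 hcrit) (sq_nonneg z)
  rw [snodM_eq hd.ne' hz.1.ne']
  have := mul_le_mul_of_nonneg_left hartanh (pow_pos hd 3).le
  rw [mul_one_div] at this
  linarith

theorem exists_snodM_neg (hd : 0 < d) (hcrit : d ≤ a * μ0) (hkbig : d ^ 3 < 3 * a * k) :
    ∃ z ∈ Ioo 0 (1 / d), snodM a d k ks μ0 z < 0 := by
  set R : ℝ → ℝ := fun z => d ^ 3 / (3 * (1 - (d * z) ^ 2)) - a * k + a * ks * z ^ 2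
  have hR0 : R 0 < 0 := by
    norm_num [R]
    linarith
  have hR : ContinuousAt R 0 := by
    fun_prop (disch := norm_num)
  obtain ⟨z, hRz, hz⟩ := (((hR.eventually (gt_mem_nhds hR0)).filter_mono nhdsWithin_le_nhds).and
    (Ioo_mem_nhdsGT (one_div_pos.2 hd))).exists
  exact ⟨z, hz, (snodM_le hd hcrit hz).trans_lt hRz⟩

theorem exists_snodM_pos (ha : 0 < a) (hd : 0 < d) (hk : 0 ≤ k) (hks : 0 < ks) (hμ0 : 0 < μ0) :
    ∃ z ∈ Ioo 0 (1 / d), 0 < snodM a d k ks μ0 z := by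
  -- `E` bounds `ψ` on `(0, 1 / d)`, and `artanh (d z) = E` at `z = tanh E / d`.
  set E := a * μ0 * (1 / d) + a * k * (1 / d) ^ 3
  have htanh : 0 < tanh E := by
    rw [tanh_eq_sinh_div_cosh]
    exact div_pos (sinh_pos_iff.2 (by positivity)) (cosh_pos E)
  set z := tanh E / d
  have hz : z ∈ Ioo 0 (1 / d) := ⟨div_pos htanh hd, div_lt_div_of_pos_right (tanh_lt_one E) hd⟩
  refine ⟨z, hz, ?_⟩
  have hdz : d * z = tanh E := mul_div_cancel₀ _ hd.ne'
  have hψ : snodPsi a k ks μ0 z = a * μ0 * z + a * k * z ^ 3 - a * ks * z ^ 5 := by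
    simp only [snodPsi]
    ring
  have h1 : a * μ0 * z ≤ a * μ0 * (1 / d) := mul_le_mul_of_nonneg_left hz.2.le (by positivity)
  have h3 : a * k * z ^ 3 ≤ a * k * (1 / d) ^ 3 :=
    mul_le_mul_of_nonneg_left (pow_le_pow_left₀ hz.1.le hz.2.le 3) (by positivity)
  have h5 : 0 < a * ks * z ^ 5 := mul_pos (mul_pos ha hks) (pow_pos hz.1 5)
  rw [snodM, hdz, artanh_tanh, hψ]
  exact div_pos (by linarith) (pow_pos hz.1 3)

end SNOD

theorem snod_three_fixed_points_general
    (a d k ks μ0 : ℝ)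
    (ha : 0 < a) (hd : 0 < d) (hk : 0 < k) (hks : 0 < ks) (hμ0 : 0 < μ0)
    (hcrit : a * μ0 ≥ d) (hkbig : 3 * a * k > d ^ 3) :
    ∃ zhat : ℝ, 0 < zhat ∧ zhat < 1 / d ∧
      {z : ℝ | -d * z + Real.tanh (a * z * (-ks * z ^ 4 + k * z ^ 2 + μ0)) = 0} =
        {-zhat, 0, zhat} := by
  obtain ⟨z₁, hz₁, hM₁⟩ := exists_snodM_neg (ks := ks) hd hcrit hkbig
  obtain ⟨z₂, hz₂, hM₂⟩ := exists_snodM_pos ha hd hk.le hks hμ0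
  obtain ⟨zhat, hzhat, hunique⟩ := isPreconnected_Ioo.exists_forall_eq_iff_of_injOn
    (continuousOn_snodM hd) (strictMonoOn_snodM ha hd hks hcrit).injOn hz₁ hz₂ hM₁.le hM₂.le
  refine ⟨zhat, hzhat.1, hzhat.2, (snodH_odd a d k ks μ0).setOf_eq_zero_eq hzhat.1
    fun z hz => ?_⟩
  rw [snodH_eq_zero_iff hd hz]
  exact ⟨fun h => (hunique z ⟨hz, h.1⟩).1 h.2, fun h => h ▸ ⟨hzhat.2, (hunique zhat hzhat).2 rfl⟩⟩

/-- Assume `b = 0`. If `a·μ₀ ≥ d` and `3·a·k > d³`, then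
`h(z) = −d·z + tanh(a·z·(−kₛ·z⁴ + k·z² + μ₀))` has exactly three real roots; more
precisely, there exists `ẑ` with `0 < ẑ < 1/d` such that the set of real roots of
`h` is `{−ẑ, 0, ẑ}`. -/
theorem snod_three_fixed_points
    (a d k ks ε μ0 : ℝ)
    (ha : 0 < a) (hd : 0 < d) (hk : 0 < k) (hks : 0 < ks) (hε : 0 < ε) (hμ0 : 0 < μ0)
    (hcrit : a * μ0 ≥ d) (hkbig : 3 * a * k > d ^ 3) :
    ∃ zhat : ℝ, 0 < zhat ∧ zhat < 1 / d ∧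
      {z : ℝ | -d * z + Real.tanh (a * z * (-ks * z ^ 4 + k * z ^ 2 + μ0)) = 0} =
        {-zhat, 0, zhat} :=
  snod_three_fixed_points_general a d k ks μ0 ha hd hk hks hμ0 hcrit hkbig
end

section
/- Assume b = 0. Then h(0) = 0, the first derivative of h at 0 equals a·μ₀ − d, the second derivative of h at 0 equals 0, and the third derivative of h at 0 equals 6·a·k − 2·a³·μ₀³. -/
/-!
Since `tanh' = 1 - tanh²`, the derivatives of `tanh` at `0` are `1, 0, -2`, so Faà di Bruno's
formula at a zero of an inner function `ψ` gives `(tanh ∘ ψ)'' = ψ''` and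
`(tanh ∘ ψ)''' = ψ''' - 2 ψ'³` (the series `tanh p = p - p³/3 + …`). Here
`ψ(z) = aμ₀ z + ak z³ - akₛ z⁵` with `ψ'(0) = aμ₀`, `ψ''(0) = 0`, `ψ'''(0) = 6ak`, and the linear
term `-d z` only contributes to the first derivative.
-/

open Real

namespace Real

theorem hasDerivAt_tanh_s16 (x : ℝ) : HasDerivAt tanh (1 - tanh x ^ 2) x := by
  have h := (hasDerivAt_sinh x).div (hasDerivAt_cosh x) (cosh_pos x).ne'
  rw [show sinh / cosh = tanh from funext fun y => (tanh_eq_sinh_div_cosh y).symm] at h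
  refine h.congr_deriv ?_
  rw [tanh_eq_sinh_div_cosh]
  field_simp

theorem deriv_tanh : deriv tanh = fun x => 1 - tanh x ^ 2 :=
  funext fun x => (hasDerivAt_tanh_s16 x).deriv

@[fun_prop]
theorem contDiff_tanh {n : WithTop ℕ∞} : ContDiff ℝ n tanh := by
  rw [show tanh = fun y => sinh y / cosh y from funext tanh_eq_sinh_div_cosh]
  exact contDiff_sinh.div contDiff_cosh fun x => (cosh_pos x).ne'

theorem iteratedDeriv_two_tanh :
    iteratedDeriv 2 tanh = fun x => -2 * tanh x * (1 - tanh x ^ 2) := by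
  rw [iteratedDeriv_succ, iteratedDeriv_one, deriv_tanh]
  funext x
  convert (((hasDerivAt_tanh_s16 x).fun_pow 2).const_sub 1).deriv using 1
  ring

theorem iteratedDeriv_three_tanh_zero : iteratedDeriv 3 tanh 0 = -2 := by
  rw [iteratedDeriv_succ, iteratedDeriv_two_tanh]
  convert (((hasDerivAt_tanh_s16 0).const_mul (-2)).fun_mul
    (((hasDerivAt_tanh_s16 0).fun_pow 2).const_sub 1)).deriv using 1
  simp

end Real

section TanhComp

variable {f : ℝ → ℝ} {x : ℝ}

theorem deriv_tanh_comp_of_eq_zero (hf : DifferentiableAt ℝ f x) (hfx : f x = 0) :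
    deriv (fun y => tanh (f y)) x = deriv f x :=
  ((hasDerivAt_tanh_s16 (f x)).comp x hf.hasDerivAt).deriv.trans (by simp [hfx])

theorem iteratedDeriv_two_tanh_comp_of_eq_zero (hf : ContDiffAt ℝ 2 f x) (hfx : f x = 0) :
    iteratedDeriv 2 (fun y => tanh (f y)) x = iteratedDeriv 2 f x := by
  simpa [Function.comp_def, hfx, iteratedDeriv_two_tanh, deriv_tanh] using
    iteratedDeriv_comp_two contDiff_tanh.contDiffAt hf

theorem iteratedDeriv_three_tanh_comp_of_eq_zero (hf : ContDiffAt ℝ 3 f x) (hfx : f x = 0) :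
    iteratedDeriv 3 (fun y => tanh (f y)) x = iteratedDeriv 3 f x - 2 * deriv f x ^ 3 := by
  have h := iteratedDeriv_comp_three contDiff_tanh.contDiffAt hf
  simp only [Function.comp_def, hfx, iteratedDeriv_three_tanh_zero, iteratedDeriv_two_tanh,
    deriv_tanh, tanh_zero] at h
  rw [h]
  ring

end TanhComp

theorem iteratedDeriv_odd_quintic_zero (c₁ c₃ c₅ : ℝ) (n : ℕ) :
    iteratedDeriv n (fun z : ℝ => c₁ * z + c₃ * z ^ 3 + c₅ * z ^ 5) 0 =
      if n = 1 then c₁ else if n = 3 then 6 * c₃ else if n = 5 then 120 * c₅ else 0 := by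
  rw [iteratedDeriv_fun_add (by fun_prop) (by fun_prop),
    iteratedDeriv_fun_add (by fun_prop) (by fun_prop), iteratedDeriv_const_mul_field,
    iteratedDeriv_const_mul_field, iteratedDeriv_const_mul_field, iteratedDeriv_fun_id_zero,
    iteratedDeriv_fun_pow_zero, iteratedDeriv_fun_pow_zero]
  rcases (by omega : n = 1 ∨ n = 3 ∨ n = 5 ∨ (n ≠ 1 ∧ n ≠ 3 ∧ n ≠ 5)) with
    rfl | rfl | rfl | ⟨h1, h3, h5⟩
  all_goals simp [Nat.factorial, *]
  all_goals ring

theorem snod_h_derivatives_at_zero_general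
    (a d k ks μ0 : ℝ)
    (h : ℝ → ℝ)
    (hh : h = fun z => -d * z + Real.tanh (a * z * (-ks * z ^ 4 + k * z ^ 2 + μ0))) :
    h 0 = 0 ∧
    iteratedDeriv 1 h 0 = a * μ0 - d ∧
    iteratedDeriv 2 h 0 = 0 ∧
    iteratedDeriv 3 h 0 = 6 * a * k - 2 * a ^ 3 * μ0 ^ 3 := by
  set ψ : ℝ → ℝ := fun z => a * μ0 * z + a * k * z ^ 3 + -(a * ks) * z ^ 5
  have hh' : h = fun z => -d * z + tanh (ψ z) := by
    rw [hh]; funext z; congr 2; ring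
  have hψ n : iteratedDeriv n ψ 0 = _ := iteratedDeriv_odd_quintic_zero _ _ _ n
  have hψ0 : ψ 0 = 0 := by simp [ψ]
  have h_split n : iteratedDeriv n h 0 =
      (if n = 1 then -d else 0) + iteratedDeriv n (fun z => tanh (ψ z)) 0 := by
    rw [hh', iteratedDeriv_fun_add (by fun_prop) (by fun_prop), iteratedDeriv_const_mul_field,
      iteratedDeriv_fun_id_zero]
    simp
  refine ⟨by simp [hh', hψ0], ?_, ?_, ?_⟩
  · rw [h_split 1, iteratedDeriv_one, deriv_tanh_comp_of_eq_zero (by fun_prop) hψ0,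
      ← iteratedDeriv_one, hψ]
    simp only [↓reduceIte]
    ring
  · rw [h_split 2, iteratedDeriv_two_tanh_comp_of_eq_zero (by fun_prop) hψ0, hψ]
    simp
  · rw [h_split 3, iteratedDeriv_three_tanh_comp_of_eq_zero (by fun_prop) hψ0,
      ← iteratedDeriv_one, hψ, hψ]
    simp only [↓reduceIte, Nat.reduceEqDiff]
    ring

/-- Assume `b = 0` and let
`h(z) = −d·z + tanh(a·z·(−kₛ·z⁴ + k·z² + μ₀))`. Then `h(0) = 0`, the first
derivative of `h` at `0` equals `a·μ₀ − d`, the second derivative of `h` at `0`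
equals `0`, and the third derivative of `h` at `0` equals `6·a·k − 2·a³·μ₀³`. -/
theorem snod_h_derivatives_at_zero
    (a d k ks ε μ0 : ℝ)
    (ha : 0 < a) (hd : 0 < d) (hk : 0 < k) (hks : 0 < ks) (hε : 0 < ε) (hμ0 : 0 < μ0)
    (h : ℝ → ℝ)
    (hh : h = fun z => -d * z + Real.tanh (a * z * (-ks * z ^ 4 + k * z ^ 2 + μ0))) :
    h 0 = 0 ∧
    iteratedDeriv 1 h 0 = a * μ0 - d ∧
    iteratedDeriv 2 h 0 = 0 ∧
    iteratedDeriv 3 h 0 = 6 * a * k - 2 * a ^ 3 * μ0 ^ 3 :=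
  snod_h_derivatives_at_zero_general a d k ks μ0 h hh
end

section
/- Assume b = 0 and a·μ₀ = d (the critical basal sensitivity). Then every positive real root ẑ of h satisfies ẑ < √(k/kₛ). -/
lemma sinh_lt_self_mul_cosh {x : ℝ} (hx : 0 < x) : Real.sinh x < x * Real.cosh x := by
  have h : StrictMonoOn (fun t : ℝ => t * Real.cosh t - Real.sinh t) (Set.Ici 0) := by
    apply strictMonoOn_of_deriv_pos (convex_Ici 0)
    · fun_prop
    · intro t ht
      rw [interior_Ici, Set.mem_Ioi] at ht
      have : HasDerivAt (fun t : ℝ => t * Real.cosh t - Real.sinh t)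
          (1 * Real.cosh t + t * Real.sinh t - Real.cosh t) t := by
        exact ((hasDerivAt_id t).mul (Real.hasDerivAt_cosh t)).sub (Real.hasDerivAt_sinh t)
      rw [this.deriv]
      have := Real.sinh_pos_iff.2 ht
      nlinarith
  have := h (Set.self_mem_Ici) (Set.mem_Ici.2 hx.le) hx
  simpa using this

lemma tanh_lt_self {x : ℝ} (hx : 0 < x) : Real.tanh x < x := by
  rw [Real.tanh_eq_sinh_div_cosh, div_lt_iff₀ (Real.cosh_pos x)]
  exact sinh_lt_self_mul_cosh hx

lemma tanh_pos_iff {x : ℝ} : 0 < Real.tanh x ↔ 0 < x := by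
  rw [Real.tanh_eq_sinh_div_cosh, div_pos_iff]
  constructor
  · rintro (⟨h, _⟩ | ⟨_, h⟩)
    · exact Real.sinh_pos_iff.1 h
    · exact absurd (Real.cosh_pos x) (not_lt.2 h.le)
  · intro h
    exact Or.inl ⟨Real.sinh_pos_iff.2 h, Real.cosh_pos x⟩

/-- Assume `b = 0` and `a·μ₀ = d` (the critical basal
sensitivity). Then every positive real root `ẑ` of
`h(z) = −d·z + tanh(a·z·(−kₛ·z⁴ + k·z² + μ₀))` satisfies `ẑ < √(k/kₛ)`. -/
theorem snod_root_below_sqrt_k_ks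
    (a d k ks ε μ0 : ℝ)
    (ha : 0 < a) (hd : 0 < d) (hk : 0 < k) (hks : 0 < ks) (hε : 0 < ε) (hμ0 : 0 < μ0)
    (hcrit : a * μ0 = d) :
    ∀ zhat : ℝ, 0 < zhat →
      -d * zhat + Real.tanh (a * zhat * (-ks * zhat ^ 4 + k * zhat ^ 2 + μ0)) = 0 →
      zhat < Real.sqrt (k / ks) := by
  intro z hz heq
  by_contra hle
  push_neg at hle
  have hsq : k / ks ≤ z ^ 2 := by
    have h0 : (0:ℝ) ≤ k / ks := (div_pos hk hks).le
    have h1 : Real.sqrt (k / ks) ^ 2 ≤ z ^ 2 :=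
      pow_le_pow_left₀ (Real.sqrt_nonneg _) hle 2
    rwa [Real.sq_sqrt h0] at h1
  have hkz : k * z ^ 2 ≤ ks * z ^ 4 := by
    have h1 : k ≤ ks * z ^ 2 := by
      rw [div_le_iff₀ hks] at hsq; linarith [hsq]
    nlinarith [sq_nonneg z]
  set ψ := a * z * (-ks * z ^ 4 + k * z ^ 2 + μ0) with hψ
  have htanh : Real.tanh ψ = d * z := by linarith
  have hdz : 0 < d * z := mul_pos hd hz
  have hψpos : 0 < ψ := tanh_pos_iff.1 (htanh ▸ hdz)
  have hψle : ψ ≤ d * z := by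
    have : ψ ≤ a * z * μ0 := by
      have := mul_pos ha hz
      nlinarith
    calc ψ ≤ a * z * μ0 := this
    _ = d * z := by rw [← hcrit]; ring
  have := tanh_lt_self hψpos
  linarith [htanh ▸ this]
end

section
/- Let μ₀ and μ₀′ be two basal sensitivities with 0 < μ₀ < μ₀′ < d/a, and suppose that for each of μ₀ and μ₀′ (with the corresponding coefficients and polynomials) the hypotheses ζ₀ ∈ ℝ₊, ξ₀ ∈ ℝ₊, D(√ζ₀) > 0 and T(√ξ₀) > 0 hold, so that for each there exist exactly two positive critical inputs and we may let b*(μ₀) and b*(μ₀′) denote the smaller critical input (the spiking input threshold) for each. Then there exists ε₀ > 0 such that for all ε ∈ (0, ε₀) for which these hypotheses hold, the input threshold is decreasing in the basal sensitivity: b*(μ₀′) < b*(μ₀). -/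
noncomputable def myArtanh (y : ℝ) : ℝ := Real.log ((1 + y) / (1 - y)) / 2

lemma tanh_formula (x : ℝ) :
    Real.tanh x = (Real.exp (2 * x) - 1) / (Real.exp (2 * x) + 1) := by
  rw [Real.tanh_eq_sinh_div_cosh, Real.sinh_eq, Real.cosh_eq]
  have h1 : Real.exp x ≠ 0 := (Real.exp_pos x).ne'
  have h2 : (0:ℝ) < Real.exp (2 * x) + 1 := by positivity
  have h3 : Real.exp (2 * x) = Real.exp x * Real.exp x := by
    rw [← Real.exp_add]; ring_nf
  have h4 : Real.exp (-x) = (Real.exp x)⁻¹ := Real.exp_neg x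
  rw [h4]
  rw [div_eq_div_iff (by positivity) h2.ne']
  field_simp
  ring_nf
  rw [show Real.exp (x * 2) = Real.exp x * Real.exp x from by rw [← Real.exp_add]; ring_nf]
  ring

lemma tanh_lt_one' (x : ℝ) : Real.tanh x < 1 := by
  rw [tanh_formula]
  have h2 : (0:ℝ) < Real.exp (2 * x) + 1 := by positivity
  rw [div_lt_one h2]
  linarith

lemma neg_one_lt_tanh' (x : ℝ) : -1 < Real.tanh x := by
  rw [tanh_formula]
  have h2 : (0:ℝ) < Real.exp (2 * x) + 1 := by positivity
  rw [lt_div_iff₀ h2]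
  nlinarith [Real.exp_pos (2 * x)]

lemma tanh_pos' {x : ℝ} (hx : 0 < x) : 0 < Real.tanh x := by
  rw [tanh_formula]
  have h2 : (0:ℝ) < Real.exp (2 * x) + 1 := by positivity
  have h3 : (1:ℝ) < Real.exp (2 * x) := Real.one_lt_exp_iff.mpr (by linarith)
  exact div_pos (by linarith) h2

lemma tanh_myArtanh {y : ℝ} (h1 : -1 < y) (h2 : y < 1) :
    Real.tanh (myArtanh y) = y := by
  have hy1 : (0:ℝ) < 1 - y := by linarith
  have hy2 : (0:ℝ) < 1 + y := by linarith
  have hu : (0:ℝ) < (1 + y) / (1 - y) := div_pos hy2 hy1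
  rw [tanh_formula]
  have h3 : 2 * myArtanh y = Real.log ((1 + y) / (1 - y)) := by
    unfold myArtanh; ring
  rw [h3, Real.exp_log hu]
  have e1 : (1 + y) / (1 - y) - 1 = 2 * y / (1 - y) := by
    field_simp; ring
  have e2 : (1 + y) / (1 - y) + 1 = 2 / (1 - y) := by
    field_simp; ring
  rw [e1, e2]
  field_simp

lemma myArtanh_tanh (x : ℝ) : myArtanh (Real.tanh x) = x := by
  have hE : (0:ℝ) < Real.exp (2 * x) := Real.exp_pos _
  have hE1 : Real.exp (2 * x) + 1 ≠ 0 := by positivity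
  rw [tanh_formula]
  unfold myArtanh
  have e1 : 1 + (Real.exp (2 * x) - 1) / (Real.exp (2 * x) + 1)
      = 2 * Real.exp (2 * x) / (Real.exp (2 * x) + 1) := by
    field_simp; ring
  have e2 : 1 - (Real.exp (2 * x) - 1) / (Real.exp (2 * x) + 1)
      = 2 / (Real.exp (2 * x) + 1) := by
    field_simp; ring
  rw [e1, e2]
  have e3 : 2 * Real.exp (2 * x) / (Real.exp (2 * x) + 1) / (2 / (Real.exp (2 * x) + 1))
      = Real.exp (2 * x) := by
    field_simp
  rw [e3, Real.log_exp]
  ring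

lemma myArtanh_zero : myArtanh 0 = 0 := by
  unfold myArtanh; norm_num

lemma myArtanh_continuousAt {y : ℝ} (h1 : -1 < y) (h2 : y < 1) :
    ContinuousAt myArtanh y := by
  have hy1 : (0:ℝ) < 1 - y := by linarith
  have hy2 : (0:ℝ) < 1 + y := by linarith
  have hu : (0:ℝ) < (1 + y) / (1 - y) := div_pos hy2 hy1
  unfold myArtanh
  apply ContinuousAt.div_const
  apply ContinuousAt.comp (g := Real.log)
  · exact Real.continuousAt_log hu.ne'
  · exact ContinuousAt.div (by fun_prop) (by fun_prop) hy1.ne'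

noncomputable def snodB (a d k ks μ : ℝ) (z : ℝ) : ℝ :=
  myArtanh (d * z) - a * z * (-ks * z ^ 4 + k * z ^ 2 + μ)

lemma snodB_zero (a d k ks μ : ℝ) : snodB a d k ks μ 0 = 0 := by
  simp [snodB, myArtanh_zero]

lemma snodB_root (a d k ks μ : ℝ) (zbμ : ℝ → ℝ)
    (huniq : ∀ b z : ℝ,
      -d * z + Real.tanh (a * z * (-ks * z ^ 4 + k * z ^ 2 + μ) + b) = 0 → z = zbμ b)
    {z : ℝ} (h1 : -1 < d * z) (h2 : d * z < 1) :
    zbμ (snodB a d k ks μ z) = z := by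
  have harg : a * z * (-ks * z ^ 4 + k * z ^ 2 + μ) + snodB a d k ks μ z
      = myArtanh (d * z) := by
    unfold snodB; ring
  have h : -d * z + Real.tanh
      (a * z * (-ks * z ^ 4 + k * z ^ 2 + μ) + snodB a d k ks μ z) = 0 := by
    rw [harg, tanh_myArtanh h1 h2]; ring
  exact (huniq _ z h).symm

lemma snodB_contAt (a d k ks μ : ℝ) {z : ℝ} (h1 : -1 < d * z) (h2 : d * z < 1) :
    ContinuousAt (snodB a d k ks μ) z := by
  unfold snodB
  apply ContinuousAt.sub
  · exact (myArtanh_continuousAt h1 h2).comp (by fun_prop)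
  · fun_prop

lemma snodB_mono (a d k ks μ : ℝ) (hd : 0 < d) (zbμ : ℝ → ℝ)
    (huniq : ∀ b z : ℝ,
      -d * z + Real.tanh (a * z * (-ks * z ^ 4 + k * z ^ 2 + μ) + b) = 0 → z = zbμ b)
    (l w zs : ℝ) (hl1 : -1 < d * l) (hw1 : d * w < 1) (hl0 : l ≤ 0)
    (hzs0 : 0 < zs) (hzsw : zs ≤ w) (hBzs : 0 < snodB a d k ks μ zs) :
    StrictMonoOn (snodB a d k ks μ) (Set.Icc l w) := by
  have hlw : l ≤ w := le_trans hl0 (le_trans hzs0.le hzsw)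
  have hbnd : ∀ z ∈ Set.Icc l w, -1 < d * z ∧ d * z < 1 := by
    intro z hz
    constructor
    · exact lt_of_lt_of_le hl1 (mul_le_mul_of_nonneg_left hz.1 hd.le)
    · exact lt_of_le_of_lt (mul_le_mul_of_nonneg_left hz.2 hd.le) hw1
  have hinj : Set.InjOn (snodB a d k ks μ) (Set.Icc l w) := by
    intro z₁ h₁ z₂ h₂ he
    have b₁ := hbnd z₁ h₁
    have b₂ := hbnd z₂ h₂
    rw [← snodB_root a d k ks μ zbμ huniq b₁.1 b₁.2, he,
      snodB_root a d k ks μ zbμ huniq b₂.1 b₂.2]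
  have hcont : ContinuousOn (snodB a d k ks μ) (Set.Icc l w) := by
    intro z hz
    exact (snodB_contAt a d k ks μ (hbnd z hz).1 (hbnd z hz).2).continuousWithinAt
  rcases ContinuousOn.strictMonoOn_of_injOn_Icc' hlw hcont hinj with h | h
  · exact h
  · exfalso
    have h0 : (0:ℝ) ∈ Set.Icc l w := ⟨hl0, le_trans hzs0.le hzsw⟩
    have hzsm : zs ∈ Set.Icc l w := ⟨le_trans hl0 hzs0.le, hzsw⟩
    have := h h0 hzsm hzs0
    rw [snodB_zero] at this
    linarith

set_option maxHeartbeats 1000000 in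
/-- Let `0 < μ₀ < μ₀′ < d/a` be two basal sensitivities, and
suppose that for each of `μ₀` and `μ₀′` (with the corresponding coefficients and
polynomials) the hypotheses `ζ₀ ∈ ℝ₊`, `ξ₀ ∈ ℝ₊`, `D(√ζ₀) > 0` and `T(√ξ₀) > 0`
hold, so that for each there exist exactly two positive critical inputs; let
`b*(ε, μ)` denote the smaller critical input (the spiking input threshold).
Then there exists `ε₀ > 0` such that for all `ε ∈ (0, ε₀)` for which these
hypotheses hold, the input threshold is decreasing in the basal sensitivity:
`b*(ε, μ₀′) < b*(ε, μ₀)`. -/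
theorem snod_threshold_decreasing_in_mu0
    (a d k ks : ℝ)
    (ha : 0 < a) (hd : 0 < d) (hk : 0 < k) (hks : 0 < ks)
    (μ0 μ0' : ℝ) (hμ0 : 0 < μ0) (hlt : μ0 < μ0') (hsub : μ0' < d / a)
    (c3 c2 : ℝ) (c1 c0 : ℝ → ℝ)
    (hc3 : c3 = a * d ^ 2 * ks) (hc2 : c2 = 3 * a * d ^ 2 * k + a * ks)
    (hc1 : ∀ μ, c1 μ = 3 * a * k - a * d ^ 2 * μ)
    (hc0 : ∀ μ, c0 μ = a * μ - d)
    (T : ℝ → ℝ → ℝ → ℝ) (D : ℝ → ℝ → ℝ)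
    (hT : ∀ ε μ z, T ε μ z = c3 * z ^ 6 - c2 * z ^ 4 + c1 μ * z ^ 2 + c0 μ - ε)
    (hD : ∀ μ z, D μ z =
      -5 * c3 * z ^ 6 + (c2 + 4 * a * ks) * z ^ 4 - c1 μ * z ^ 2 - c0 μ)
    (ζ0 ξ0 : ℝ → ℝ)
    (hζ0 : ∀ μ, ζ0 μ = ((c2 + 4 * a * ks) -
      Real.sqrt ((c2 + 4 * a * ks) ^ 2 - 15 * c1 μ * c3)) / (15 * c3))
    (hξ0 : ∀ μ, ξ0 μ = (c2 - Real.sqrt (c2 ^ 2 - 3 * c1 μ * c3)) / (3 * c3))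
    (hhyp : ∀ μ ∈ ({μ0, μ0'} : Set ℝ),
      (c2 + 4 * a * ks) ^ 2 - 15 * c1 μ * c3 ≥ 0 ∧ 0 < ζ0 μ ∧
      c2 ^ 2 - 3 * c1 μ * c3 ≥ 0 ∧ 0 < ξ0 μ ∧
      0 < D μ (Real.sqrt (ζ0 μ)))
    -- `zb μ b` is the unique real root of `h` with basal sensitivity `μ` and input `b`
    (zb : ℝ → ℝ → ℝ)
    (hroot : ∀ μ ∈ ({μ0, μ0'} : Set ℝ), ∀ b : ℝ,
      -d * zb μ b +
        Real.tanh (a * zb μ b * (-ks * zb μ b ^ 4 + k * zb μ b ^ 2 + μ) + b) = 0)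
    (huniq : ∀ μ ∈ ({μ0, μ0'} : Set ℝ), ∀ b z : ℝ,
      -d * z + Real.tanh (a * z * (-ks * z ^ 4 + k * z ^ 2 + μ) + b) = 0 → z = zb μ b)
    -- `bs ε μ` is the spiking input threshold: the smaller of the two positive
    -- critical inputs at which `T` vanishes at the unique fixed point
    (bs : ℝ → ℝ → ℝ)
    (hbs : ∀ ε : ℝ, 0 < ε → ∀ μ ∈ ({μ0, μ0'} : Set ℝ),
      0 < T ε μ (Real.sqrt (ξ0 μ)) →
        0 < bs ε μ ∧ T ε μ (zb μ (bs ε μ)) = 0 ∧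
        ∀ b : ℝ, 0 < b → T ε μ (zb μ b) = 0 → bs ε μ ≤ b) :
    ∃ ε0 : ℝ, 0 < ε0 ∧ ∀ ε : ℝ, 0 < ε → ε < ε0 →
      0 < T ε μ0 (Real.sqrt (ξ0 μ0)) → 0 < T ε μ0' (Real.sqrt (ξ0 μ0')) →
      bs ε μ0' < bs ε μ0 := by
  refine ⟨1, one_pos, ?_⟩
  intro ε hε _ hpos hpos'
  have hmem0 : μ0 ∈ ({μ0, μ0'} : Set ℝ) := Set.mem_insert _ _
  have hmem0' : μ0' ∈ ({μ0, μ0'} : Set ℝ) := Set.mem_insert_of_mem _ rfl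
  have hμ0'pos : 0 < μ0' := lt_trans hμ0 hlt
  obtain ⟨hb0pos, hT0, -⟩ := hbs ε hε μ0 hmem0 hpos
  obtain ⟨-, -, hmin'⟩ := hbs ε hε μ0' hmem0' hpos'
  set b0 := bs ε μ0 with hb0def
  set z0 := zb μ0 b0 with hz0def
  -- bounds on z0 from the equilibrium equation
  have hr := hroot μ0 hmem0 b0
  have htz : d * z0 = Real.tanh (a * z0 * (-ks * z0 ^ 4 + k * z0 ^ 2 + μ0) + b0) := by
    rw [← hz0def] at hr; linarith
  have hz0u : d * z0 < 1 := by rw [htz]; exact tanh_lt_one' _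
  have hz0l : -1 < d * z0 := by rw [htz]; exact neg_one_lt_tanh' _
  -- B μ0 z0 = b0
  have hBz0 : snodB a d k ks μ0 z0 = b0 := by
    have h : myArtanh (d * z0)
        = a * z0 * (-ks * z0 ^ 4 + k * z0 ^ 2 + μ0) + b0 := by
      rw [htz, myArtanh_tanh]
    unfold snodB
    rw [h]; ring
  -- the reference point zs where B is positive
  obtain ⟨M, hMdef⟩ : ∃ M : ℝ,
      M = a * (1/d) * (ks * (1/d)^4 + k * (1/d)^2 + μ0') + 1 := ⟨_, rfl⟩
  have hMpos : 0 < M := by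
    have h1 : 0 < ks * (1/d)^4 + k * (1/d)^2 + μ0' := by positivity
    have h2 : 0 < a * (1/d) * (ks * (1/d)^4 + k * (1/d)^2 + μ0') :=
      mul_pos (mul_pos ha (by positivity)) h1
    rw [hMdef]; linarith
  obtain ⟨zs, hzsdef⟩ : ∃ zs : ℝ, zs = Real.tanh M / d := ⟨_, rfl⟩
  have hzs0 : 0 < zs := by rw [hzsdef]; exact div_pos (tanh_pos' hMpos) hd
  have hdzs : d * zs = Real.tanh M := by
    rw [hzsdef]; field_simp
  have hzs1 : d * zs < 1 := by rw [hdzs]; exact tanh_lt_one' _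
  have hzsle : zs ≤ 1 / d := by
    rw [le_div_iff₀ hd]; nlinarith
  have hBzs : ∀ μ : ℝ, 0 < μ → μ ≤ μ0' → 0 < snodB a d k ks μ zs := by
    intro μ h1 h2
    unfold snodB
    rw [hdzs, myArtanh_tanh]
    have p2 : zs^2 ≤ (1/d)^2 := pow_le_pow_left₀ hzs0.le hzsle 2
    have p4 : zs^4 ≤ (1/d)^4 := pow_le_pow_left₀ hzs0.le hzsle 4
    have h3 : a * zs * (-ks * zs ^ 4 + k * zs ^ 2 + μ)
        ≤ a * (1/d) * (ks * (1/d)^4 + k * (1/d)^2 + μ0') := by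
      have hzd : 0 < (1:ℝ)/d := by positivity
      have hin : -ks * zs ^ 4 + k * zs ^ 2 + μ ≤ ks * (1/d)^4 + k * (1/d)^2 + μ0' := by
        nlinarith [pow_pos hzs0 4, pow_pos hzs0 2]
      have hinpos0 : (0:ℝ) ≤ ks * (1/d)^4 + k * (1/d)^2 + μ0' := by positivity
      rcases le_total (-ks * zs ^ 4 + k * zs ^ 2 + μ) 0 with hneg | hposin
      · nlinarith [mul_nonneg (mul_pos ha hzs0).le (neg_nonneg.mpr hneg),
          mul_nonneg (mul_pos ha hzd).le hinpos0]
      · nlinarith [mul_le_mul_of_nonneg_left hin (mul_pos ha hzs0).le,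
          mul_le_mul_of_nonneg_right (mul_le_mul_of_nonneg_left hzsle ha.le) hinpos0]
    rw [hMdef]
    linarith
  -- strict monotonicity of B μ0 on an interval containing 0, z0 and zs
  have hl1 : -1 < d * min z0 0 := by
    rcases min_cases z0 0 with ⟨he, _⟩ | ⟨he, _⟩ <;> rw [he]
    · exact hz0l
    · simp
  have hw1 : d * max z0 zs < 1 := by
    rcases max_cases z0 zs with ⟨he, _⟩ | ⟨he, _⟩ <;> rw [he]
    · exact hz0u
    · exact hzs1
  have mono0 := snodB_mono a d k ks μ0 hd (zb μ0) (huniq μ0 hmem0)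
    (min z0 0) (max z0 zs) zs hl1 hw1 (min_le_right _ _) hzs0 (le_max_right _ _)
    (hBzs μ0 hμ0 hlt.le)
  have hmem00 : (0:ℝ) ∈ Set.Icc (min z0 0) (max z0 zs) :=
    ⟨min_le_right _ _, le_trans hzs0.le (le_max_right _ _)⟩
  have hmemz0 : z0 ∈ Set.Icc (min z0 0) (max z0 zs) :=
    ⟨min_le_left _ _, le_max_left _ _⟩
  have hz0pos : 0 < z0 := by
    by_contra hc
    push_neg at hc
    rcases eq_or_lt_of_le hc with he | hlt'
    · rw [he, snodB_zero] at hBz0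
      linarith
    · have := mono0 hmemz0 hmem00 hlt'
      rw [snodB_zero, hBz0] at this
      linarith
  -- trace comparison
  have hT0' : 0 < T ε μ0' z0 := by
    have key : T ε μ0' z0 = T ε μ0 z0 + a * (μ0' - μ0) * (1 - (d * z0)^2) := by
      rw [hT ε μ0' z0, hT ε μ0 z0, hc1 μ0, hc1 μ0', hc0 μ0, hc0 μ0']
      ring
    rw [key, hT0]
    have hx : 0 < a * (μ0' - μ0) := mul_pos ha (sub_pos.mpr hlt)
    have hy : 0 < 1 - (d * z0) ^ 2 := by nlinarith
    linarith [mul_pos hx hy]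
  have hT'0 : T ε μ0' 0 < 0 := by
    rw [hT ε μ0' 0, hc0 μ0']
    have : μ0' * a < d := (lt_div_iff₀ ha).mp hsub
    nlinarith
  -- IVT to find a smaller critical point of the μ0' trace polynomial
  set g : ℝ → ℝ := fun z => c3 * z ^ 6 - c2 * z ^ 4 + c1 μ0' * z ^ 2 + c0 μ0' - ε
    with hgdef
  have hgc : ContinuousOn g (Set.Icc 0 z0) := by
    apply Continuous.continuousOn; fun_prop
  have h0mem : (0:ℝ) ∈ Set.Ioo (g 0) (g z0) := by
    have e0 : g 0 = T ε μ0' 0 := (hT ε μ0' 0).symm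
    have e1 : g z0 = T ε μ0' z0 := (hT ε μ0' z0).symm
    rw [e0, e1]
    exact ⟨hT'0, hT0'⟩
  obtain ⟨z', hz'mem, hgz'⟩ := intermediate_value_Ioo hz0pos.le hgc h0mem
  have hTz' : T ε μ0' z' = 0 := by rw [hT ε μ0' z']; exact hgz'
  -- monotonicity of B μ0' on [0, max z0 zs]
  have mono' := snodB_mono a d k ks μ0' hd (zb μ0') (huniq μ0' hmem0')
    0 (max z0 zs) zs (by simp) hw1 le_rfl hzs0 (le_max_right _ _)
    (hBzs μ0' hμ0'pos le_rfl)
  have hmem0I : (0:ℝ) ∈ Set.Icc (0:ℝ) (max z0 zs) :=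
    ⟨le_rfl, le_trans hzs0.le (le_max_right _ _)⟩
  have hmemz'I : z' ∈ Set.Icc (0:ℝ) (max z0 zs) :=
    ⟨hz'mem.1.le, le_trans hz'mem.2.le (le_max_left _ _)⟩
  have hmemz0I : z0 ∈ Set.Icc (0:ℝ) (max z0 zs) := ⟨hz0pos.le, le_max_left _ _⟩
  set b' := snodB a d k ks μ0' z' with hb'def
  have hb'pos : 0 < b' := by
    have := mono' hmem0I hmemz'I hz'mem.1
    rwa [snodB_zero] at this
  have hBz0' : snodB a d k ks μ0' z0 = b0 - a * z0 * (μ0' - μ0) := by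
    have h : snodB a d k ks μ0' z0 = snodB a d k ks μ0 z0 - a * z0 * (μ0' - μ0) := by
      unfold snodB; ring
    rw [h, hBz0]
  have hb'lt : b' < b0 := by
    have h1 := mono' hmemz'I hmemz0I hz'mem.2
    rw [hBz0'] at h1
    nlinarith [mul_pos (mul_pos ha hz0pos) (sub_pos.mpr hlt)]
  have hz'b : zb μ0' b' = z' := by
    apply snodB_root a d k ks μ0' (zb μ0') (huniq μ0' hmem0')
    · nlinarith [hz'mem.1]
    · nlinarith [hz'mem.2]
  have hfinal : T ε μ0' (zb μ0' b') = 0 := by rw [hz'b]; exact hTz'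
  have := hmin' b' hb'pos hfinal
  linarith
end
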